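/- arXiv:1608.07082 — 5 statements merged into one kernel-verified Lean document; each statement's English description precedes it below -/
import Mathlib

section
/- Consider the ODE w'' + h(w) = 0, where h : ℝ → ℝ is locally Lipschitz, satisfies h(s)·s > 0 for all s ≠ 0, and its primitive H(s) = ∫₀ˢ h(σ)dσ tends to +∞ as |s| → ∞. If w is a global solution with initial data (w(0), w'(0)) = (a, b) ≠ (0, 0), then w is not eventually of one sign: for every t₀ ≥ 0 there exist t₁, t₂ > t₀ with w(t₁) > 0 and w(t₂) < 0. -/
/-!
Suppose `w ≥ 0` beyond `t₀`. The energy `w'²/2 + H(w)` is conserved and positive, so `w` never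
vanishes there (a zero would be a minimum, where `w'` vanishes too), and since `H → ∞` it keeps
`w` bounded above. Thus `w'' = -h(w) < 0`, and a concave function bounded below is nondecreasing:
`w` stays in a compact interval `[m, R]` with `m > 0`, on which `h ≥ δ > 0`. Then `w'' ≤ -δ`
drives `w'` to `-∞`, contradicting `w' ≥ 0`. Positive values are the same statement for `-w`,
which solves the equation with nonlinearity `s ↦ -h(-s)`.
-/

open Filter Set intervalIntegral

noncomputable def energy (h : ℝ → ℝ) (x v : ℝ) : ℝ :=
  v ^ 2 / 2 + ∫ σ in (0:ℝ)..x, h σ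

section MonotoneBounds

variable {f : ℝ → ℝ} {a c m : ℝ}

theorem tendsto_atBot_of_deriv_le_neg (hf : Differentiable ℝ f) (hc : 0 < c)
    (hderiv : ∀ t ≥ a, deriv f t ≤ -c) : Tendsto f atTop atBot := by
  have hbound : ∀ t ≥ a, f t ≤ f a - c * (t - a) := fun t ht => by
    have := (convex_Ici a).image_sub_le_mul_sub_of_deriv_le hf.continuous.continuousOn
      hf.differentiableOn (fun x hx => hderiv x (interior_subset hx)) a self_mem_Ici t ht ht
    linarith
  refine tendsto_atBot_mono' _ ((eventually_ge_atTop a).mono hbound) ?_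
  exact tendsto_atBot_add_const_left _ _ (tendsto_neg_atTop_atBot.comp
    ((tendsto_atTop_add_const_right _ _ tendsto_id).const_mul_atTop hc))

theorem deriv_nonneg_of_antitoneOn_deriv (hf : Differentiable ℝ f)
    (hanti : AntitoneOn (deriv f) (Ici a)) (hbdd : ∀ t ≥ a, m ≤ f t) :
    ∀ t ≥ a, 0 ≤ deriv f t := by
  intro t₁ ht₁
  by_contra! hneg
  have hf_bot := tendsto_atBot_of_deriv_le_neg hf (neg_pos.mpr hneg) (a := t₁) fun t ht => by
    rw [neg_neg]; exact hanti ht₁ (le_trans ht₁ ht) ht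
  obtain ⟨t, ht, hlt⟩ := ((eventually_ge_atTop a).and (hf_bot.eventually_lt_atBot m)).exists
  exact (hbdd t ht).not_gt hlt

end MonotoneBounds

theorem exists_le_of_tendsto_cocompact {F : ℝ → ℝ} (hF : Tendsto F (cocompact ℝ) atTop)
    (C : ℝ) : ∃ R, ∀ s, F s ≤ C → s ≤ R := by
  obtain ⟨R, hR⟩ :=
    eventually_atTop.mp ((hF.mono_left atTop_le_cocompact).eventually_gt_atTop C)
  exact ⟨R, fun s hs => le_of_not_gt fun hRs => (hR s hRs.le).not_ge hs⟩

section Energy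

variable {h w : ℝ → ℝ}

theorem primitive_pos (hc : Continuous h) (hsign : ∀ s : ℝ, s ≠ 0 → h s * s > 0) {s : ℝ}
    (hs : s ≠ 0) : 0 < ∫ σ in (0:ℝ)..s, h σ := by
  rcases hs.lt_or_gt with hs | hs
  · rw [integral_symm, neg_pos, ← neg_pos, ← integral_neg]
    refine intervalIntegral_pos_of_pos_on (hc.neg.intervalIntegrable s 0)
      (fun x hx => ?_) hs
    nlinarith [hsign x hx.2.ne, hx.2]
  · refine intervalIntegral_pos_of_pos_on (hc.intervalIntegrable 0 s) (fun x hx => ?_) hs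
    nlinarith [hsign x hx.1.ne', hx.1]

theorem energy_pos (hc : Continuous h) (hsign : ∀ s : ℝ, s ≠ 0 → h s * s > 0) {x v : ℝ}
    (hne : (x, v) ≠ (0, 0)) : 0 < energy h x v := by
  unfold energy
  rcases eq_or_ne x 0 with rfl | hx
  · have hv : v ≠ 0 := fun hv => hne (by rw [hv])
    simp only [integral_same, add_zero]
    positivity
  · have := primitive_pos hc hsign hx
    positivity

theorem energy_eq_of_ode (hc : Continuous h) (hw : ContDiff ℝ 2 w)
    (hode : ∀ t, deriv (deriv w) t + h (w t) = 0) (t : ℝ) :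
    energy h (w t) (deriv w t) = energy h (w 0) (deriv w 0) := by
  have hderiv : ∀ t, HasDerivAt (fun t => energy h (w t) (deriv w t)) 0 t := by
    intro t
    have hv := ((hw.differentiable_deriv_two t).hasDerivAt.pow 2).div_const 2
    have hH := (hc.integral_hasStrictDerivAt 0 (w t)).hasDerivAt.comp t
      (hw.differentiable two_ne_zero t).hasDerivAt
    exact (hv.add hH).congr_deriv (by linear_combination deriv w t * hode t)
  exact is_const_of_deriv_eq_zero (fun t => (hderiv t).differentiableAt)
    (fun t => (hderiv t).deriv) t 0

theorem pos_of_nonneg_of_ode (hc : Continuous h) (hsign : ∀ s : ℝ, s ≠ 0 → h s * s > 0)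
    (hw : ContDiff ℝ 2 w) (hode : ∀ t, deriv (deriv w) t + h (w t) = 0)
    (hne : (w 0, deriv w 0) ≠ (0, 0)) {t₀ : ℝ} (hnonneg : ∀ t, t₀ < t → 0 ≤ w t) :
    ∀ t, t₀ < t → 0 < w t := by
  intro t ht
  refine (hnonneg t ht).lt_of_ne' fun hzero => (energy_pos hc hsign hne).ne' ?_
  have hmin : IsLocalMin w t :=
    mem_of_superset (Ioi_mem_nhds ht) fun s hs => by simpa [hzero] using hnonneg s hs
  rw [← energy_eq_of_ode hc hw hode t]
  simp [energy, hzero, hmin.deriv_eq_zero]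

theorem exists_le_of_ode (hc : Continuous h)
    (hH : Tendsto (fun s : ℝ => ∫ σ in (0:ℝ)..s, h σ) (cocompact ℝ) atTop)
    (hw : ContDiff ℝ 2 w) (hode : ∀ t, deriv (deriv w) t + h (w t) = 0) :
    ∃ R, ∀ t, w t ≤ R := by
  obtain ⟨R, hR⟩ := exists_le_of_tendsto_cocompact hH (energy h (w 0) (deriv w 0))
  refine ⟨R, fun t => hR _ ?_⟩
  have := energy_eq_of_ode hc hw hode t
  unfold energy at this ⊢
  nlinarith [sq_nonneg (deriv w t)]

theorem exists_neg_of_ode (hc : Continuous h)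
    (hsign : ∀ s : ℝ, s ≠ 0 → h s * s > 0)
    (hH : Tendsto (fun s : ℝ => ∫ σ in (0:ℝ)..s, h σ) (cocompact ℝ) atTop)
    (hw : ContDiff ℝ 2 w) (hode : ∀ t, deriv (deriv w) t + h (w t) = 0)
    (hne : (w 0, deriv w 0) ≠ (0, 0)) (t₀ : ℝ) :
    ∃ t, t₀ < t ∧ w t < 0 := by
  by_contra! hnonneg
  have hw_pos := pos_of_nonneg_of_ode hc hsign hw hode hne hnonneg
  obtain ⟨R, hR⟩ := exists_le_of_ode hc hH hw hode
  have h_pos : ∀ s, 0 < s → 0 < h s := fun s hs =>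
    (pos_iff_pos_of_mul_pos (hsign s hs.ne')).mpr hs
  have hw1 := hw.differentiable two_ne_zero
  have hw2 := hw.differentiable_deriv_two
  set t₁ := t₀ + 1
  have hw'_nonneg : ∀ t ≥ t₁, 0 ≤ deriv w t := by
    refine deriv_nonneg_of_antitoneOn_deriv hw1 ?_ (m := 0) fun t ht => hnonneg t (by linarith)
    refine antitoneOn_of_deriv_nonpos (convex_Ici _) hw2.continuous.continuousOn
      hw2.differentiableOn fun t ht => ?_
    rw [interior_Ici] at ht
    linarith [hode t, h_pos (w t) (hw_pos t (by linarith [ht.out]))]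
  have hmono : MonotoneOn w (Ici t₁) :=
    monotoneOn_of_deriv_nonneg (convex_Ici _) hw1.continuous.continuousOn hw1.differentiableOn
      fun t ht => hw'_nonneg t (by rw [interior_Ici] at ht; exact ht.out.le)
  obtain ⟨δ, hδ, hδle⟩ := isCompact_Icc.exists_forall_le' hc.continuousOn
    fun s (hs : s ∈ Icc (w t₁) R) => h_pos s ((hw_pos t₁ (by linarith)).trans_le hs.1)
  have hw'' : ∀ t ≥ t₁, deriv (deriv w) t ≤ -δ := fun t ht => by
    linarith [hode t, hδle (w t) ⟨hmono self_mem_Ici ht ht, hR t⟩]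
  obtain ⟨t, ht, hlt⟩ := ((eventually_ge_atTop t₁).and
    ((tendsto_atBot_of_deriv_le_neg hw2 hδ hw'').eventually_lt_atBot 0)).exists
  exact (hw'_nonneg t ht).not_gt hlt

end Energy

theorem tendsto_primitive_neg_comp_neg {h : ℝ → ℝ}
    (hH : Tendsto (fun s : ℝ => ∫ σ in (0:ℝ)..s, h σ) (cocompact ℝ) atTop) :
    Tendsto (fun s : ℝ => ∫ σ in (0:ℝ)..s, -h (-σ)) (cocompact ℝ) atTop := by
  have hcomp : (fun s : ℝ => ∫ σ in (0:ℝ)..s, -h (-σ))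
      = (fun s => ∫ σ in (0:ℝ)..s, h σ) ∘ Neg.neg := by
    ext s
    simp [integral_comp_neg, integral_symm (-s)]
  rw [hcomp]
  exact hH.comp (Homeomorph.neg ℝ).map_cocompact.le

/-- For the ODE `w'' + h(w) = 0` with `h` locally Lipschitz,
`h(s)·s > 0` for `s ≠ 0`, and primitive `H(s) = ∫₀ˢ h → ∞` as `|s| → ∞`:
a global solution with nonzero initial data `(w(0), w'(0)) ≠ (0,0)` is not
eventually of one sign: past every `t₀ ≥ 0` it takes positive and negative
values. -/
theorem solution_is_not_eventually_of_one_sign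
    (h : ℝ → ℝ) (hlip : LocallyLipschitz h)
    (hsign : ∀ s : ℝ, s ≠ 0 → h s * s > 0)
    (hH : Filter.Tendsto (fun s : ℝ => ∫ σ in (0:ℝ)..s, h σ)
      (Filter.cocompact ℝ) Filter.atTop)
    (w : ℝ → ℝ) (hw : ContDiff ℝ 2 w)
    (hode : ∀ t : ℝ, deriv (deriv w) t + h (w t) = 0)
    (hne : (w 0, deriv w 0) ≠ (0, 0)) :
    ∀ t₀ : ℝ, 0 ≤ t₀ →
      (∃ t₁ : ℝ, t₀ < t₁ ∧ 0 < w t₁) ∧ (∃ t₂ : ℝ, t₀ < t₂ ∧ w t₂ < 0) := by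
  intro t₀ _
  have hc := hlip.continuous
  refine ⟨?_, exists_neg_of_ode hc hsign hH hw hode hne t₀⟩
  obtain ⟨t, ht, hneg⟩ := exists_neg_of_ode (h := fun s => -h (-s)) (w := fun t => -w t)
    (hc.comp continuous_neg).neg
    (fun s hs => by nlinarith [hsign (-s) (neg_ne_zero.mpr hs)])
    (tendsto_primitive_neg_comp_neg hH) hw.neg
    (fun t => by simp only [deriv.fun_neg', neg_neg]; linarith [hode t])
    (by simpa using hne) t₀
  exact ⟨t, ht, neg_neg_iff_pos.mp hneg⟩
end

section
/- Let m, n ≥ 1 be integers, S > 0 and P, Λₘ, Λₙ ∈ ℝ. Then for any initial data (φ(0), φ'(0), ψ(0), ψ'(0)) ∈ ℝ⁴ the nonlinear system φ'' + m²(Λₘ − P)φ + S m²(m²φ² + n²ψ²)φ = 0, ψ'' + n²(Λₙ − P)ψ + S n²(m²φ² + n²ψ²)ψ = 0 has a unique global C² solution (φ, ψ) : ℝ → ℝ², and the energy E = φ'²/2 + ψ'²/2 + m²(Λₘ − P)φ²/2 + n²(Λₙ − P)ψ²/2 + S(m²φ² + n²ψ²)²/4 is constant along every solution. -/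
/-!
In phase space `x = (φ, φ', ψ, ψ')` the system is the autonomous first-order equation
`x' = field x` with a smooth vector field, and the energy is a first integral of it. Because
`S > 0` and `m², n² ≥ 1`, the quartic term makes the energy coercive, so every energy level set
is bounded. Multiplying the field by a bump function equal to `1` on a ball containing the level
set of the initial datum gives a compactly supported field, hence globally Lipschitz, which has a
unique global solution; the energy is still a first integral of the cut-off field, so that solution
never leaves the ball and solves the original equation. Uniqueness follows in the same way.
-/

open Set

section IntegralCurve

variable {E : Type*} [NormedAddCommGroup E] [NormedSpace ℝ E] {F : E → E} {γ : ℝ → E}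

theorem IsIntegralCurve.apply_eq_apply_zero_of_fderiv_eq_zero (hγ : IsIntegralCurve γ fun _ ↦ F)
    {V : E → ℝ} (hV : Differentiable ℝ V) (hVF : ∀ p, fderiv ℝ V p (F p) = 0) (t : ℝ) :
    V (γ t) = V (γ 0) := by
  have hderiv (τ : ℝ) : HasDerivAt (V ∘ γ) 0 τ := by
    simpa [hVF] using (hV (γ τ)).hasFDerivAt.comp_hasDerivAt τ (hγ τ)
  exact is_const_of_deriv_eq_zero (fun τ ↦ (hderiv τ).differentiableAt)
    (fun τ ↦ (hderiv τ).deriv) t 0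

theorem IsIntegralCurve.contDiff (hγ : IsIntegralCurve γ fun _ ↦ F) {n : ℕ}
    (hF : ContDiff ℝ n F) : ContDiff ℝ (n + 1) γ := by
  have hdγ : deriv γ = F ∘ γ := funext fun t ↦ (hγ t).deriv
  induction n with
  | zero =>
    exact contDiff_one_iff_deriv.2 ⟨fun t ↦ (hγ t).differentiableAt,
      hdγ ▸ hF.continuous.comp hγ.continuous⟩
  | succ n ih =>
    have hγn := ih (hF.of_le (by norm_cast; omega))
    refine contDiff_succ_iff_deriv.2 ⟨fun t ↦ (hγ t).differentiableAt, by simp, ?_⟩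
    rw [hdγ]
    exact hF.comp hγn

variable [CompleteSpace E]

theorem exists_forall_mem_Ioo_hasDerivAt_of_lipschitzWith {K : NNReal} (hK : LipschitzWith K F)
    {C : ℝ} (hC : ∀ x, ‖F x‖ ≤ C) (x₀ : E) (T : ℝ) :
    ∃ γ : ℝ → E, γ 0 = x₀ ∧ ∀ t ∈ Ioo (-T) T, HasDerivAt γ (F (γ t)) t := by
  have hC₀ : 0 ≤ C := (norm_nonneg _).trans (hC x₀)
  have hpl : IsPicardLindelof (fun _ ↦ F) (tmin := -|T|) (tmax := |T|)
      ⟨0, by simp⟩ x₀ ⟨C * |T|, by positivity⟩ 0 ⟨C, hC₀⟩ K :=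
    IsPicardLindelof.of_time_independent (fun x _ ↦ hC x) hK.lipschitzOnWith (by simp; rfl)
  obtain ⟨γ, hγ₀, hγ⟩ := hpl.exists_eq_forall_mem_Icc_hasDerivWithinAt₀
  have hT : Ioo (-T) T ⊆ Ioo (-|T|) |T| :=
    Ioo_subset_Ioo (neg_le_neg (le_abs_self T)) (le_abs_self T)
  exact ⟨γ, hγ₀, fun t ht ↦ (hγ t (Ioo_subset_Icc_self (hT ht))).hasDerivAt
    (Icc_mem_nhds (hT ht).1 (hT ht).2)⟩

theorem exists_isIntegralCurve_of_lipschitzWith {K : NNReal} (hK : LipschitzWith K F)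
    {C : ℝ} (hC : ∀ x, ‖F x‖ ≤ C) (x₀ : E) :
    ∃ γ : ℝ → E, γ 0 = x₀ ∧ IsIntegralCurve γ fun _ ↦ F := by
  choose sol hsol₀ hsol using exists_forall_mem_Ioo_hasDerivAt_of_lipschitzWith hK hC x₀
  have hagree (T T' u : ℝ) (hT : |u| < T) (hT' : |u| < T') : sol T u = sol T' u := by
    wlog hle : T ≤ T' generalizing T T'
    · exact (this T' T hT' hT (le_of_not_ge hle)).symm
    have hsub : Ioo (-T) T ⊆ Ioo (-T') T' := Ioo_subset_Ioo (neg_le_neg hle) hle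
    refine ODE_solution_unique_of_mem_Ioo (v := fun _ ↦ F) (s := fun _ ↦ univ)
      (fun _ _ ↦ hK.lipschitzOnWith) (t₀ := 0) ?_ (fun t ht ↦ ⟨hsol T t ht, trivial⟩)
      (fun t ht ↦ ⟨hsol T' t (hsub ht), trivial⟩) (by rw [hsol₀, hsol₀]) (abs_lt.1 hT)
    exact ⟨by linarith [abs_nonneg u], by linarith [abs_nonneg u]⟩
  refine ⟨fun t ↦ sol (|t| + 1) t, hsol₀ _, fun t ↦ ?_⟩
  have hlt : |t| < |t| + 1 := lt_add_one _
  have hloc : (fun u ↦ sol (|u| + 1) u) =ᶠ[nhds t] sol (|t| + 1) := by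
    filter_upwards [(isOpen_lt continuous_abs continuous_const).mem_nhds hlt] with u hu
    exact hagree _ _ u (lt_add_one _) hu
  exact (hsol _ t (abs_lt.1 hlt)).congr_of_eventuallyEq hloc

theorem existsUnique_isIntegralCurve_of_isBounded_level [FiniteDimensional ℝ E]
    (hF : ContDiff ℝ 1 F) {V : E → ℝ} (hV : Differentiable ℝ V)
    (hVF : ∀ p, fderiv ℝ V p (F p) = 0) {x₀ : E} (hlevel : Bornology.IsBounded {p | V p = V x₀}) :
    ∃! γ : ℝ → E, γ 0 = x₀ ∧ IsIntegralCurve γ fun _ ↦ F := by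
  obtain ⟨r, hr⟩ := isBounded_iff_forall_norm_le.1 hlevel
  have hr₀ : 0 ≤ r := (norm_nonneg _).trans (hr x₀ rfl)
  let θ : ContDiffBump (0 : E) := ⟨r + 1, r + 2, by linarith, by linarith⟩
  let G : E → E := fun p ↦ θ p • F p
  have hG : ContDiff ℝ 1 G := θ.contDiff.smul hF
  have hGc : HasCompactSupport G := θ.hasCompactSupport.smul_right
  have hVG (p : E) : fderiv ℝ V p (G p) = 0 := by
    rw [map_smul, hVF, smul_zero]
  have hGF (p : E) (hp : V p = V x₀) : G p = F p := by
    have : θ p = 1 := θ.one_of_mem_closedBall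
      (mem_closedBall_zero_iff.2 ((hr p hp).trans (by linarith : r ≤ r + 1)))
    simp [G, this]
  have hcongr (δ : ℝ → E) (hδ : ∀ t, V (δ t) = V x₀) :
      (IsIntegralCurve δ fun _ ↦ G) ↔ IsIntegralCurve δ fun _ ↦ F :=
    forall_congr' fun t ↦ by simp only [hGF _ (hδ t)]
  obtain ⟨K, hK⟩ := hG.lipschitzWith_of_hasCompactSupport hGc one_ne_zero
  obtain ⟨C, hC⟩ := hGc.exists_bound_of_continuous hG.continuous
  obtain ⟨γ, hγ₀, hγ⟩ := exists_isIntegralCurve_of_lipschitzWith hK hC x₀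
  have hγV (t : ℝ) : V (γ t) = V x₀ := hγ₀ ▸ hγ.apply_eq_apply_zero_of_fderiv_eq_zero hV hVG t
  refine ⟨γ, ⟨hγ₀, (hcongr γ hγV).1 hγ⟩, fun δ ⟨hδ₀, hδ⟩ ↦ ?_⟩
  have hδV (t : ℝ) : V (δ t) = V x₀ := hδ₀ ▸ hδ.apply_eq_apply_zero_of_fderiv_eq_zero hV hVF t
  exact ODE_solution_unique_univ (v := fun _ ↦ G) (s := fun _ ↦ univ) (t₀ := 0)
    (fun _ ↦ hK.lipschitzOnWith) (fun t ↦ ⟨(hcongr δ hδV).2 hδ t, trivial⟩)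
    (fun t ↦ ⟨hγ t, trivial⟩) (hδ₀.trans hγ₀.symm)

end IntegralCurve

section ProdCurve

variable {𝕜 : Type*} [NontriviallyNormedField 𝕜] {F G : Type*} [NormedAddCommGroup F]
  [NormedSpace 𝕜 F] [NormedAddCommGroup G] [NormedSpace 𝕜 G] {f : 𝕜 → F × G} {f' : F × G} {t : 𝕜}

theorem HasDerivAt.fst (h : HasDerivAt f f' t) : HasDerivAt (fun τ ↦ (f τ).1) f'.1 t :=
  (hasFDerivAt_fst (𝕜 := 𝕜) (p := f t)).comp_hasDerivAt t h

theorem HasDerivAt.snd (h : HasDerivAt f f' t) : HasDerivAt (fun τ ↦ (f τ).2) f'.2 t :=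
  (hasFDerivAt_snd (𝕜 := 𝕜) (p := f t)).comp_hasDerivAt t h

end ProdCurve

theorem norm_le_sqrt_sum_sq (x : ℝ × ℝ × ℝ × ℝ) :
    ‖x‖ ≤ √(x.1 ^ 2 + x.2.1 ^ 2 + x.2.2.1 ^ 2 + x.2.2.2 ^ 2) := by
  have h (a : ℝ) (ha : a ^ 2 ≤ x.1 ^ 2 + x.2.1 ^ 2 + x.2.2.1 ^ 2 + x.2.2.2 ^ 2) :
      ‖a‖ ≤ √(x.1 ^ 2 + x.2.1 ^ 2 + x.2.2.1 ^ 2 + x.2.2.2 ^ 2) :=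
    Real.abs_le_sqrt ha
  have := sq_nonneg x.1; have := sq_nonneg x.2.1
  have := sq_nonneg x.2.2.1; have := sq_nonneg x.2.2.2
  simp only [Prod.norm_def]
  exact max_le (h _ (by linarith)) (max_le (h _ (by linarith))
    (max_le (h _ (by linarith)) (h _ (by linarith))))

noncomputable section

namespace TwoModeSystem

variable (s α β μ ν : ℝ)

/-- Coordinates `x = (φ, φ', ψ, ψ')`; the plate system is the case `s = S`, `α = m²(Λₘ − P)`,
`β = n²(Λₙ − P)`, `μ = m²`, `ν = n²`. -/
def field (x : ℝ × ℝ × ℝ × ℝ) : ℝ × ℝ × ℝ × ℝ :=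
  (x.2.1, -(α * x.1) - s * μ * (μ * x.1 ^ 2 + ν * x.2.2.1 ^ 2) * x.1,
   x.2.2.2, -(β * x.2.2.1) - s * ν * (μ * x.1 ^ 2 + ν * x.2.2.1 ^ 2) * x.2.2.1)

def energy (x : ℝ × ℝ × ℝ × ℝ) : ℝ :=
  x.2.1 ^ 2 / 2 + x.2.2.2 ^ 2 / 2 + α * x.1 ^ 2 / 2 + β * x.2.2.1 ^ 2 / 2
    + s * (μ * x.1 ^ 2 + ν * x.2.2.1 ^ 2) ^ 2 / 4

def IsSolution (φ ψ : ℝ → ℝ) : Prop :=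
  ContDiff ℝ 2 φ ∧ ContDiff ℝ 2 ψ ∧
    (∀ t, deriv (deriv φ) t + α * φ t + s * μ * (μ * φ t ^ 2 + ν * ψ t ^ 2) * φ t = 0) ∧
    (∀ t, deriv (deriv ψ) t + β * ψ t + s * ν * (μ * φ t ^ 2 + ν * ψ t ^ 2) * ψ t = 0)

def lift (φ ψ : ℝ → ℝ) (t : ℝ) : ℝ × ℝ × ℝ × ℝ := (φ t, deriv φ t, ψ t, deriv ψ t)

theorem contDiff_field (n : WithTop ℕ∞) : ContDiff ℝ n (field s α β μ ν) := by
  unfold field; fun_prop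

theorem differentiable_energy : Differentiable ℝ (energy s α β μ ν) := by
  unfold energy; fun_prop

theorem fderiv_energy_field (x : ℝ × ℝ × ℝ × ℝ) :
    fderiv ℝ (energy s α β μ ν) x (field s α β μ ν x) = 0 := by
  have hsnd := hasFDerivAt_snd (𝕜 := ℝ) (p := x)
  have hu := hasFDerivAt_fst (𝕜 := ℝ) (p := x)
  have hp := hsnd.fst
  have hv := hsnd.snd.fst
  have hq := hsnd.snd.snd
  have hE : HasFDerivAt (energy s α β μ ν) _ x :=
    (((hp.pow 2).const_mul (1 / 2)).add ((hq.pow 2).const_mul (1 / 2)) |>.add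
      (((hu.pow 2).const_mul (α / 2)).add ((hv.pow 2).const_mul (β / 2))) |>.add
      (((((hu.pow 2).const_mul μ).add ((hv.pow 2).const_mul ν)).pow 2).const_mul (s / 4))
      ).congr_of_eventuallyEq (.of_forall fun y ↦ by simp only [energy, Pi.add_apply]; ring)
  rw [hE.fderiv]
  simp only [one_div, Nat.add_one_sub_one, pow_one, nsmul_eq_mul, Nat.cast_ofNat, Pi.add_apply,
    smul_add, field, add_apply, smul_apply,
    ContinuousLinearMap.comp_apply, ContinuousLinearMap.coe_snd', ContinuousLinearMap.coe_fst',
    smul_eq_mul]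
  ring

variable {s α β μ ν}

theorem sum_sq_le_energy (hs : 0 < s) (hμ : 1 ≤ μ) (hν : 1 ≤ ν) (x : ℝ × ℝ × ℝ × ℝ) :
    x.1 ^ 2 + x.2.1 ^ 2 + x.2.2.1 ^ 2 + x.2.2.2 ^ 2
      ≤ 2 * energy s α β μ ν x + ((|α| + |β|) ^ 2 + 1) / s := by
  obtain ⟨u, p, v, q⟩ := x
  set A := μ * u ^ 2 + ν * v ^ 2
  set D := |α| + |β|
  have hu : u ^ 2 ≤ A := by nlinarith [sq_nonneg u, sq_nonneg v]
  have hv : v ^ 2 ≤ A := by nlinarith [sq_nonneg u, sq_nonneg v]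
  have hpot : -D * A ≤ α * u ^ 2 + β * v ^ 2 := by
    nlinarith [neg_abs_le α, neg_abs_le β, abs_nonneg α, abs_nonneg β, sq_nonneg u, sq_nonneg v,
      mul_le_mul_of_nonneg_left hu (abs_nonneg α), mul_le_mul_of_nonneg_left hv (abs_nonneg β)]
  -- completing the square in `s A / 2`
  have hquartic : s * (A / 2 - (D ^ 2 + 1) / (2 * s)) ≤ s * (s * A ^ 2 / 4 - D * A / 2) := by
    have : s * (A / 2 - (D ^ 2 + 1) / (2 * s)) = s * A / 2 - (D ^ 2 + 1) / 2 := by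
      field_simp
    rw [this]
    nlinarith [sq_nonneg (s * A / 2 - (D + 1) / 2), sq_nonneg (D - 1)]
  have := le_of_mul_le_mul_left hquartic hs
  have hdiv : (D ^ 2 + 1) / (2 * s) = ((D ^ 2 + 1) / s) / 2 := by field_simp
  simp only [energy]
  nlinarith

theorem isBounded_energy_level (hs : 0 < s) (hμ : 1 ≤ μ) (hν : 1 ≤ ν) (E₀ : ℝ) :
    Bornology.IsBounded {x | energy s α β μ ν x = E₀} := by
  refine isBounded_iff_forall_norm_le.2 ⟨√(2 * E₀ + ((|α| + |β|) ^ 2 + 1) / s), fun x hx ↦ ?_⟩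
  rw [← hx]
  exact (norm_le_sqrt_sum_sq x).trans (Real.sqrt_le_sqrt (sum_sq_le_energy hs hμ hν x))

theorem existsUnique_isIntegralCurve (hs : 0 < s) (hμ : 1 ≤ μ) (hν : 1 ≤ ν)
    (x₀ : ℝ × ℝ × ℝ × ℝ) : ∃! γ : ℝ → ℝ × ℝ × ℝ × ℝ, γ 0 = x₀ ∧
      IsIntegralCurve γ fun _ ↦ field s α β μ ν :=
  existsUnique_isIntegralCurve_of_isBounded_level (contDiff_field s α β μ ν 1)
    (differentiable_energy s α β μ ν) (fderiv_energy_field s α β μ ν)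
    (isBounded_energy_level hs hμ hν _)

theorem IsSolution.isIntegralCurve_lift {φ ψ : ℝ → ℝ} (h : IsSolution s α β μ ν φ ψ) :
    IsIntegralCurve (lift φ ψ) fun _ ↦ field s α β μ ν := by
  obtain ⟨hφ, hψ, hφ'', hψ''⟩ := h
  intro t
  have hd {f : ℝ → ℝ} (hf : ContDiff ℝ 2 f) : HasDerivAt f (deriv f t) t :=
    (hf.differentiable two_ne_zero t).hasDerivAt
  have hd' {f : ℝ → ℝ} (hf : ContDiff ℝ 2 f) : HasDerivAt (deriv f) (deriv (deriv f) t) t :=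
    ((hf.iterate_deriv' 1 1).differentiable one_ne_zero t).hasDerivAt
  refine (hd hφ).prodMk ((hd' hφ).prodMk ((hd hψ).prodMk (hd' hψ))) |>.congr_deriv ?_
  simp only [lift, field, Prod.mk.injEq, true_and]
  exact ⟨by linarith [hφ'' t], by linarith [hψ'' t]⟩

theorem IsSolution.energy_lift_eq {φ ψ : ℝ → ℝ} (h : IsSolution s α β μ ν φ ψ) (t : ℝ) :
    energy s α β μ ν (lift φ ψ t) = energy s α β μ ν (lift φ ψ 0) :=
  h.isIntegralCurve_lift.apply_eq_apply_zero_of_fderiv_eq_zero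
    (differentiable_energy s α β μ ν) (fderiv_energy_field s α β μ ν) t

theorem isSolution_of_isIntegralCurve {γ : ℝ → ℝ × ℝ × ℝ × ℝ}
    (hγ : IsIntegralCurve γ fun _ ↦ field s α β μ ν) :
    IsSolution s α β μ ν (fun t ↦ (γ t).1) (fun t ↦ (γ t).2.2.1) ∧
      lift (fun t ↦ (γ t).1) (fun t ↦ (γ t).2.2.1) = γ := by
  have hγ2 : ContDiff ℝ 2 γ := hγ.contDiff (n := 1) (contDiff_field s α β μ ν 1)
  have hφ' : deriv (fun t ↦ (γ t).1) = fun t ↦ (γ t).2.1 := funext fun t ↦ (hγ t).fst.deriv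
  have hψ' : deriv (fun t ↦ (γ t).2.2.1) = fun t ↦ (γ t).2.2.2 :=
    funext fun t ↦ (hγ t).snd.snd.fst.deriv
  refine ⟨⟨contDiff_fst.comp hγ2, contDiff_fst.comp (contDiff_snd.comp (contDiff_snd.comp hγ2)),
    fun t ↦ ?_, fun t ↦ ?_⟩, funext fun t ↦ ?_⟩
  · rw [hφ', (hγ t).snd.fst.deriv]
    simp only [field]; ring
  · rw [hψ', (hγ t).snd.snd.snd.deriv]
    simp only [field]; ring
  · simp only [lift, hφ', hψ']

end TwoModeSystem

end

/-- The two-mode system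
`φ'' + m²(Λₘ − P)φ + S m²(m²φ² + n²ψ²)φ = 0`,
`ψ'' + n²(Λₙ − P)ψ + S n²(m²φ² + n²ψ²)ψ = 0`
has, for any initial data in `ℝ⁴`, a unique global `C²` solution `(φ, ψ)`, and
the energy
`E = φ'²/2 + ψ'²/2 + m²(Λₘ − P)φ²/2 + n²(Λₙ − P)ψ²/2 + S(m²φ² + n²ψ²)²/4`
is constant along every solution. -/
theorem two_mode_system_wellposed_and_energy_conserved
    (m n : ℕ) (hm : 1 ≤ m) (hn : 1 ≤ n) (S P Λm Λn : ℝ) (hS : 0 < S)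
    (a₁ b₁ a₂ b₂ : ℝ) :
    (∃ φ ψ : ℝ → ℝ,
      (ContDiff ℝ 2 φ ∧ ContDiff ℝ 2 ψ ∧
        φ 0 = a₁ ∧ deriv φ 0 = b₁ ∧ ψ 0 = a₂ ∧ deriv ψ 0 = b₂ ∧
        (∀ t : ℝ, deriv (deriv φ) t + (m : ℝ) ^ 2 * (Λm - P) * φ t
          + S * (m : ℝ) ^ 2 * ((m : ℝ) ^ 2 * (φ t) ^ 2 + (n : ℝ) ^ 2 * (ψ t) ^ 2) * φ t = 0) ∧
        (∀ t : ℝ, deriv (deriv ψ) t + (n : ℝ) ^ 2 * (Λn - P) * ψ t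
          + S * (n : ℝ) ^ 2 * ((m : ℝ) ^ 2 * (φ t) ^ 2 + (n : ℝ) ^ 2 * (ψ t) ^ 2) * ψ t = 0)) ∧
      (∀ φ₂ ψ₂ : ℝ → ℝ,
        (ContDiff ℝ 2 φ₂ ∧ ContDiff ℝ 2 ψ₂ ∧
          φ₂ 0 = a₁ ∧ deriv φ₂ 0 = b₁ ∧ ψ₂ 0 = a₂ ∧ deriv ψ₂ 0 = b₂ ∧
          (∀ t : ℝ, deriv (deriv φ₂) t + (m : ℝ) ^ 2 * (Λm - P) * φ₂ t
            + S * (m : ℝ) ^ 2 * ((m : ℝ) ^ 2 * (φ₂ t) ^ 2 + (n : ℝ) ^ 2 * (ψ₂ t) ^ 2) * φ₂ t = 0) ∧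
          (∀ t : ℝ, deriv (deriv ψ₂) t + (n : ℝ) ^ 2 * (Λn - P) * ψ₂ t
            + S * (n : ℝ) ^ 2 * ((m : ℝ) ^ 2 * (φ₂ t) ^ 2 + (n : ℝ) ^ 2 * (ψ₂ t) ^ 2) * ψ₂ t = 0)) →
        φ₂ = φ ∧ ψ₂ = ψ)) ∧
    (∀ φ ψ : ℝ → ℝ, ContDiff ℝ 2 φ → ContDiff ℝ 2 ψ →
      (∀ t : ℝ, deriv (deriv φ) t + (m : ℝ) ^ 2 * (Λm - P) * φ t
        + S * (m : ℝ) ^ 2 * ((m : ℝ) ^ 2 * (φ t) ^ 2 + (n : ℝ) ^ 2 * (ψ t) ^ 2) * φ t = 0) →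
      (∀ t : ℝ, deriv (deriv ψ) t + (n : ℝ) ^ 2 * (Λn - P) * ψ t
        + S * (n : ℝ) ^ 2 * ((m : ℝ) ^ 2 * (φ t) ^ 2 + (n : ℝ) ^ 2 * (ψ t) ^ 2) * ψ t = 0) →
      ∀ t : ℝ,
        (deriv φ t) ^ 2 / 2 + (deriv ψ t) ^ 2 / 2
          + (m : ℝ) ^ 2 * (Λm - P) * (φ t) ^ 2 / 2
          + (n : ℝ) ^ 2 * (Λn - P) * (ψ t) ^ 2 / 2
          + S * ((m : ℝ) ^ 2 * (φ t) ^ 2 + (n : ℝ) ^ 2 * (ψ t) ^ 2) ^ 2 / 4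
        = (deriv φ 0) ^ 2 / 2 + (deriv ψ 0) ^ 2 / 2
          + (m : ℝ) ^ 2 * (Λm - P) * (φ 0) ^ 2 / 2
          + (n : ℝ) ^ 2 * (Λn - P) * (ψ 0) ^ 2 / 2
          + S * ((m : ℝ) ^ 2 * (φ 0) ^ 2 + (n : ℝ) ^ 2 * (ψ 0) ^ 2) ^ 2 / 4) := by
  have hμ : (1 : ℝ) ≤ (m : ℝ) ^ 2 := one_le_pow₀ (by exact_mod_cast hm)
  have hν : (1 : ℝ) ≤ (n : ℝ) ^ 2 := one_le_pow₀ (by exact_mod_cast hn)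
  obtain ⟨γ, ⟨hγ₀, hγ⟩, hγ_unique⟩ := TwoModeSystem.existsUnique_isIntegralCurve hS hμ hν
    (a₁, b₁, a₂, b₂) (α := (m : ℝ) ^ 2 * (Λm - P)) (β := (n : ℝ) ^ 2 * (Λn - P))
  obtain ⟨⟨hφ, hψ, hφ'', hψ''⟩, hlift⟩ := TwoModeSystem.isSolution_of_isIntegralCurve hγ
  have hinit := hlift ▸ hγ₀
  simp only [TwoModeSystem.lift, Prod.mk.injEq] at hinit
  obtain ⟨h₁, h₂, h₃, h₄⟩ := hinit
  refine ⟨⟨_, _, ⟨hφ, hψ, h₁, h₂, h₃, h₄, hφ'', hψ''⟩, ?_⟩, ?_⟩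
  · rintro φ₂ ψ₂ ⟨hφ₂, hψ₂, h₁', h₂', h₃', h₄', hφ₂'', hψ₂''⟩
    have hsol : TwoModeSystem.IsSolution _ _ _ _ _ φ₂ ψ₂ := ⟨hφ₂, hψ₂, hφ₂'', hψ₂''⟩
    have heq := hγ_unique _ ⟨by simp only [TwoModeSystem.lift, h₁', h₂', h₃', h₄'],
      hsol.isIntegralCurve_lift⟩
    exact ⟨funext fun t ↦ congrArg (·.1) (congrFun heq t),
      funext fun t ↦ congrArg (·.2.2.1) (congrFun heq t)⟩
  · intro φ ψ hφ hψ hφ'' hψ''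
    exact TwoModeSystem.IsSolution.energy_lift_eq ⟨hφ, hψ, hφ'', hψ''⟩
end

section
/- Let μ > 0 and α > 0, and let φ_α be the solution of the Duffing equation φ'' + μφ + φ³ = 0 with φ(0) = α, φ'(0) = 0. Then φ_α is periodic; denoting by T its minimal positive period, one has φ_α'(t) < 0 for all t ∈ (0, T/2), φ_α(T/2) = −α, φ_α'(T/2) = 0, and φ_α(t + T/2) = −φ_α(t) for all t ∈ ℝ. In particular t ↦ φ_α(t)² has period T/2. -/
/-!
The Duffing equation is invariant under time reversal `t ↦ c - t` and under `φ ↦ -φ`, and a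
solution is determined by `(φ, φ')` at a single time. Hence `φ` is even about `0`, where `φ'`
vanishes, and odd about its first positive zero `s`; the two reflections compose to
`φ (t + 2s) = -φ t`. While `φ > 0` we have `φ'' = -(μφ + φ³) < 0`, which forces that zero to
exist and gives `φ' < 0` on `(0, s]`, hence on `(0, 2s)` by the odd reflection. So `φ` decreases
strictly from `α` to `-α` on `[0, 2s]`, stays below `α` on `(0, 4s)`, and `4s` is the minimal
period.
-/

open Set Function

theorem ODE_solution_unique_of_locallyLipschitz {E : Type*} [NormedAddCommGroup E]
    [NormedSpace ℝ E] {v : E → E} (hv : LocallyLipschitz v) {f g : ℝ → E}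
    (hf : ∀ t, HasDerivAt f (v (f t)) t) (hg : ∀ t, HasDerivAt g (v (g t)) t)
    {t₀ : ℝ} (heq : f t₀ = g t₀) : f = g := by
  funext t
  set a := min t t₀ - 1
  set b := max t t₀ + 1
  have hcont : ∀ {h : ℝ → E}, (∀ t, HasDerivAt h (v (h t)) t) → ContinuousOn h (Icc a b) :=
    fun hh u _ => (hh u).continuousAt.continuousWithinAt
  set K := f '' Icc a b ∪ g '' Icc a b
  obtain ⟨L, hL⟩ := hv.locallyLipschitzOn.exists_lipschitzOnWith_of_compact
    ((isCompact_Icc.image_of_continuousOn (hcont hf)).union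
      (isCompact_Icc.image_of_continuousOn (hcont hg)))
  have hab : ∀ {u}, u = t ∨ u = t₀ → u ∈ Ioo a b := by
    rintro u (rfl | rfl)
    · exact ⟨by linarith [min_le_left u t₀], by linarith [le_max_left u t₀]⟩
    · exact ⟨by linarith [min_le_right t u], by linarith [le_max_right t u]⟩
  exact ODE_solution_unique_of_mem_Ioo (v := fun _ => v) (s := fun _ => K) (fun _ _ => hL)
    (hab (Or.inr rfl))
    (fun u hu => ⟨hf u, Or.inl ⟨u, Ioo_subset_Icc_self hu, rfl⟩⟩)
    (fun u hu => ⟨hg u, Or.inr ⟨u, Ioo_subset_Icc_self hu, rfl⟩⟩) heq (hab (Or.inl rfl))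

theorem exists_nonpos_of_deriv_le_neg {f : ℝ → ℝ} (hf : Differentiable ℝ f) {b c : ℝ}
    (hc : 0 < c) (hf' : ∀ t ∈ Ici b, deriv f t ≤ -c) : ∃ t ≥ b, f t ≤ 0 := by
  have hstep : 0 ≤ |f b| / c := by positivity
  refine ⟨b + |f b| / c, by linarith, ?_⟩
  have hdecay := (convex_Ici b).image_sub_le_mul_sub_of_deriv_le hf.continuous.continuousOn
    hf.differentiableOn (fun t ht => hf' t (interior_subset ht)) b self_mem_Ici
    (b + |f b| / c) (by simp [hstep]) (by linarith)
  have hdrop : -c * (b + |f b| / c - b) = -|f b| := by field_simp; ring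
  linarith [le_abs_self (f b)]

theorem exists_first_zero {f : ℝ → ℝ} (hf : Continuous f) {a b : ℝ} (hab : a ≤ b)
    (ha : 0 < f a) (hb : f b ≤ 0) : ∃ s ∈ Ioc a b, f s = 0 ∧ ∀ t ∈ Ico a s, 0 < f t := by
  have hzero : ∀ {t}, a ≤ t → f t ≤ 0 → ∃ r ∈ Icc a t, f r = 0 := fun hat hft =>
    intermediate_value_Icc' hat hf.continuousOn ⟨hft, ha.le⟩
  obtain ⟨z, hz, hfz⟩ := hzero hab hb
  obtain ⟨s, ⟨hs, hfs⟩, hleast⟩ := (isCompact_Icc.inter_right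
    (isClosed_singleton.preimage hf)).exists_isLeast ⟨z, hz, hfz⟩
  have hpos : ∀ t ∈ Ico a s, 0 < f t := by
    rintro t ⟨hat, hts⟩
    by_contra! hft
    obtain ⟨r, hr, hfr⟩ := hzero hat hft
    exact (hleast ⟨⟨hr.1, hr.2.trans (hts.le.trans hs.2)⟩, hfr⟩).not_gt (hr.2.trans_lt hts)
  refine ⟨s, ⟨hs.1.lt_of_ne ?_, hs.2⟩, hfs, hpos⟩
  rintro rfl
  exact ha.ne' hfs

theorem Function.Antiperiodic.le_of_periodic_of_strictAntiOn {f : ℝ → ℝ} {c T : ℝ}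
    (hf : Antiperiodic f c) (hmono : StrictAntiOn f (Icc 0 c)) (hT : 0 < T)
    (hper : Periodic f T) : 2 * c ≤ T := by
  by_contra! hTc
  have hc : 0 < c := by linarith
  have hlt : f T < f 0 := by
    rcases le_or_gt T c with h | h
    · exact hmono ⟨le_rfl, hc.le⟩ ⟨hT.le, h⟩ hT
    · have := hmono ⟨by linarith, by linarith⟩ ⟨hc.le, le_rfl⟩ (by linarith : T - c < c)
      rw [hf.eq, hf.sub_eq] at this
      linarith
  exact hlt.ne (by simpa using hper 0)

theorem deriv_const_sub_eq_of_forall_eq_neg {f : ℝ → ℝ} {a : ℝ} (h : ∀ t, f (a - t) = -f t)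
    (t : ℝ) : deriv f (a - t) = deriv f t := by
  have := congrArg (fun g => deriv g t) (funext h : (fun t => f (a - t)) = fun t => -f t)
  simpa [deriv_comp_const_sub, deriv.fun_neg] using this

def duffingField (μ : ℝ) (p : ℝ × ℝ) : ℝ × ℝ := (p.2, -(μ * p.1 + p.1 ^ 3))

theorem locallyLipschitz_duffingField (μ : ℝ) : LocallyLipschitz (duffingField μ) :=
  ContDiff.locallyLipschitz (𝕂 := ℝ) (by unfold duffingField; fun_prop)

def IsDuffingSolution (μ : ℝ) (φ : ℝ → ℝ) : Prop :=
  ∀ t, HasDerivAt φ (deriv φ t) t ∧ HasDerivAt (deriv φ) (-(μ * φ t + φ t ^ 3)) t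

theorem isDuffingSolution_of_contDiff {μ : ℝ} {φ : ℝ → ℝ} (hφ : ContDiff ℝ 2 φ)
    (hode : ∀ t, deriv (deriv φ) t + μ * φ t + φ t ^ 3 = 0) : IsDuffingSolution μ φ := by
  have hd2 : Differentiable ℝ (deriv φ) :=
    ((contDiff_succ_iff_deriv (n := 1)).mp hφ).2.2.differentiable (by norm_num)
  refine fun t => ⟨(hφ.differentiable (by norm_num) t).hasDerivAt, ?_⟩
  exact (hd2 t).hasDerivAt.congr_deriv (by linarith [hode t])

namespace IsDuffingSolution

variable {μ : ℝ} {φ ψ : ℝ → ℝ}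

theorem differentiable (hφ : IsDuffingSolution μ φ) : Differentiable ℝ φ :=
  fun t => (hφ t).1.differentiableAt

theorem continuous_deriv (hφ : IsDuffingSolution μ φ) : Continuous (deriv φ) :=
  continuous_iff_continuousAt.2 fun t => (hφ t).2.continuousAt

theorem eq_of_eq_of_deriv_eq (hφ : IsDuffingSolution μ φ) (hψ : IsDuffingSolution μ ψ) {t₀ : ℝ}
    (h : φ t₀ = ψ t₀) (h' : deriv φ t₀ = deriv ψ t₀) : φ = ψ := by
  have hphase := ODE_solution_unique_of_locallyLipschitz (locallyLipschitz_duffingField μ)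
    (fun t => (hφ t).1.prodMk (hφ t).2) (fun t => (hψ t).1.prodMk (hψ t).2) (Prod.ext h h')
  exact funext fun t => congrArg Prod.fst (congrFun hphase t)

theorem neg (hφ : IsDuffingSolution μ φ) : IsDuffingSolution μ (fun t => -φ t) := by
  have hd : deriv (fun t => -φ t) = fun t => -deriv φ t := funext fun _ => deriv.fun_neg
  exact fun t => hd ▸ ⟨(hφ t).1.neg, (hφ t).2.neg.congr_deriv (by ring)⟩

theorem comp_const_sub (hφ : IsDuffingSolution μ φ) (c : ℝ) :
    IsDuffingSolution μ (fun t => φ (c - t)) := by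
  have hd : deriv (fun t => φ (c - t)) = fun t => -deriv φ (c - t) :=
    funext fun t => deriv_comp_const_sub φ c t
  refine fun t => hd ▸ ⟨(hφ (c - t)).1.comp_const_sub c t, ?_⟩
  exact ((hφ (c - t)).2.comp_const_sub c t).neg.congr_deriv (by ring)

theorem comp_const_sub_eq_of_deriv_eq_zero (hφ : IsDuffingSolution μ φ) {c : ℝ}
    (h : deriv φ c = 0) (t : ℝ) : φ (2 * c - t) = φ t := by
  refine congrFun ((hφ.comp_const_sub (2 * c)).eq_of_eq_of_deriv_eq hφ (t₀ := c) ?_ ?_) t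
  · ring_nf
  · rw [deriv_comp_const_sub, two_mul, add_sub_cancel_right, h, neg_zero]

theorem comp_const_sub_eq_neg_of_eq_zero (hφ : IsDuffingSolution μ φ) {c : ℝ}
    (h : φ c = 0) (t : ℝ) : φ (2 * c - t) = -φ t := by
  refine congrFun ((hφ.comp_const_sub (2 * c)).eq_of_eq_of_deriv_eq hφ.neg (t₀ := c) ?_ ?_) t
  · simp [two_mul, h]
  · simp [deriv_comp_const_sub, deriv.fun_neg, two_mul]

theorem antiperiodic (hφ : IsDuffingSolution μ φ) {a b : ℝ} (ha : deriv φ a = 0)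
    (hb : φ b = 0) : Antiperiodic φ (2 * (b - a)) := fun t => by
  calc φ (t + 2 * (b - a)) = φ (2 * b - (2 * a - t)) := by ring_nf
    _ = -φ (2 * a - t) := hφ.comp_const_sub_eq_neg_of_eq_zero hb _
    _ = -φ t := by rw [hφ.comp_const_sub_eq_of_deriv_eq_zero ha]

theorem strictAntiOn_deriv (hφ : IsDuffingSolution μ φ) (hμ : 0 ≤ μ) {D : Set ℝ}
    (hD : Convex ℝ D) (hpos : ∀ t ∈ interior D, 0 < φ t) : StrictAntiOn (deriv φ) D :=
  strictAntiOn_of_deriv_neg hD hφ.continuous_deriv.continuousOn fun t ht => by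
    have := hpos t ht
    rw [(hφ t).2.deriv, neg_neg_iff_pos]
    positivity

theorem exists_pos_nonpos (hφ : IsDuffingSolution μ φ) (hμ : 0 ≤ μ) (h0 : deriv φ 0 ≤ 0) :
    ∃ t, 0 < t ∧ φ t ≤ 0 := by
  by_contra! hpos
  have hanti := hφ.strictAntiOn_deriv hμ (convex_Ici 0) (by rw [interior_Ici]; exact hpos)
  have h1 : deriv φ 1 < 0 := (hanti self_mem_Ici (mem_Ici.2 zero_le_one) one_pos).trans_le h0
  obtain ⟨t, ht, hφt⟩ := exists_nonpos_of_deriv_le_neg hφ.differentiable (neg_pos.2 h1)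
    fun t ht => by
      simpa using hanti.antitoneOn (mem_Ici.2 zero_le_one) (mem_Ici.2 (zero_le_one.trans ht)) ht
  exact (hpos t (by linarith)).not_ge hφt

theorem deriv_neg_of_first_zero (hφ : IsDuffingSolution μ φ) (hμ : 0 ≤ μ) (h0 : deriv φ 0 = 0)
    {s : ℝ} (hs : φ s = 0) (hpos : ∀ t ∈ Ico 0 s, 0 < φ t) :
    ∀ t ∈ Ioo 0 (2 * s), deriv φ t < 0 := by
  have hanti : StrictAntiOn (deriv φ) (Icc 0 s) := hφ.strictAntiOn_deriv hμ (convex_Icc 0 s)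
    (by rw [interior_Icc]; exact fun t ht => hpos t (Ioo_subset_Ico_self ht))
  have hleft : ∀ t ∈ Ioc 0 s, deriv φ t < 0 := fun t ht =>
    h0 ▸ hanti ⟨le_rfl, ht.1.le.trans ht.2⟩ (Ioc_subset_Icc_self ht) ht.1
  rintro t ⟨ht0, hts⟩
  rcases le_or_gt t s with h | h
  · exact hleft t ⟨ht0, h⟩
  · rw [← deriv_const_sub_eq_of_forall_eq_neg (hφ.comp_const_sub_eq_neg_of_eq_zero hs) t]
    exact hleft _ ⟨by linarith, by linarith⟩

end IsDuffingSolution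

/-- The solution `φ_α` of the Duffing equation
`φ'' + μφ + φ³ = 0` with `φ(0) = α > 0`, `φ'(0) = 0` is periodic; with `T` its
minimal positive period, `φ_α' < 0` on `(0, T/2)`, `φ_α(T/2) = −α`,
`φ_α'(T/2) = 0`, `φ_α(t + T/2) = −φ_α(t)` for all `t`, and `φ_α²` has period
`T/2`. -/
theorem duffing_periodicity_structure
    (μ α : ℝ) (hμ : 0 < μ) (hα : 0 < α)
    (φ : ℝ → ℝ) (hφ : ContDiff ℝ 2 φ)
    (hode : ∀ t : ℝ, deriv (deriv φ) t + μ * φ t + (φ t) ^ 3 = 0)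
    (h0 : φ 0 = α) (h0' : deriv φ 0 = 0) :
    ∃ T : ℝ, 0 < T ∧ Function.Periodic φ T ∧
      (∀ T' : ℝ, 0 < T' → Function.Periodic φ T' → T ≤ T') ∧
      (∀ t ∈ Set.Ioo 0 (T / 2), deriv φ t < 0) ∧
      φ (T / 2) = -α ∧ deriv φ (T / 2) = 0 ∧
      (∀ t : ℝ, φ (t + T / 2) = -φ t) ∧
      Function.Periodic (fun t : ℝ => (φ t) ^ 2) (T / 2) := by
  have hsol := isDuffingSolution_of_contDiff hφ hode
  obtain ⟨t₁, ht₁, hφt₁⟩ := hsol.exists_pos_nonpos hμ.le h0'.le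
  obtain ⟨s, ⟨hs, -⟩, hφs, hpos⟩ :=
    exists_first_zero hsol.differentiable.continuous ht₁.le (h0 ▸ hα) hφt₁
  have hanti : Antiperiodic φ (2 * s) := by simpa using hsol.antiperiodic h0' hφs
  have hderiv := hsol.deriv_neg_of_first_zero hμ.le h0' hφs hpos
  have hmono : StrictAntiOn φ (Icc 0 (2 * s)) :=
    strictAntiOn_of_deriv_neg (convex_Icc _ _) hsol.differentiable.continuous.continuousOn
      (by rwa [interior_Icc])
  refine ⟨4 * s, ?_⟩
  rw [show 4 * s / 2 = 2 * s by ring]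
  refine ⟨by positivity, ?_, fun T' hT' hper => ?_, hderiv, ?_, ?_, hanti, ?_⟩
  · simpa only [← mul_assoc, show (2 : ℝ) * 2 = 4 by norm_num] using hanti.periodic_two_mul
  · linarith [hanti.le_of_periodic_of_strictAntiOn hmono hT' hper]
  · rw [hanti.eq, h0]
  · simpa [h0'] using deriv_const_sub_eq_of_forall_eq_neg
      (hsol.comp_const_sub_eq_neg_of_eq_zero hφs) 0
  · exact fun t => by simp only [hanti t, neg_sq]
end

section
/- Let μ > 0 and α > 0, and let φ_α be the solution of the Duffing equation φ'' + μφ + φ³ = 0 with φ(0) = α, φ'(0) = 0, with conserved energy E = μα²/2 + α⁴/4 and Θ± = √(μ² + 4E) ± μ. Then φ_α is periodic and its minimal positive period T(E) is given by the formula T(E) = 4√2 ∫₀¹ ds / √((Θ₋ s² + Θ₊)(1 − s²)). -/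
/-!
Energy conservation `φ'²/2 + μφ²/2 + φ⁴/4 = E` keeps `φ` in `[-α, α]`, where the vector field of
the equation is Lipschitz, so a solution is determined by its position and velocity at one time.
The equation is invariant under `t ↦ c - t` and under `φ ↦ -φ`; hence `φ` is even (as
`φ'(0) = 0`) and odd about its first positive zero `t₀`, which exists because `φ'` decreases
strictly while `φ > 0`. So `φ` is `4t₀`-periodic, and since `φ < α` on `(0, 4t₀)` no smaller period
exists. On `(0, t₀]` the solution falls from `α` to `0` with speed
`|φ'| = √(2(E - μφ²/2 - φ⁴/4))`; the substitution `s = φ/α` turns `t₀` into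
`√2 ∫₀¹ ds / √((α²s² + α² + 2μ)(1 - s²))`, and `Θ₋ = α²`, `Θ₊ = α² + 2μ`.
-/

open Set Real MeasureTheory

theorem StrictAntiOn.image_Ioc_eq {α δ : Type*} [ConditionallyCompleteLinearOrder α]
    [TopologicalSpace α] [OrderTopology α] [DenselyOrdered α] [LinearOrder δ]
    [TopologicalSpace δ] [OrderClosedTopology δ] {f : α → δ} {a b : α} (hab : a ≤ b)
    (hf : ContinuousOn f (Icc a b)) (hanti : StrictAntiOn f (Icc a b)) :
    f '' Ioc a b = Ico (f b) (f a) := by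
  refine Subset.antisymm (image_subset_iff.2 fun t ht => ⟨?_, ?_⟩) (intermediate_value_Ioc' hab hf)
  · exact hanti.antitoneOn (Ioc_subset_Icc_self ht) (right_mem_Icc.2 hab) ht.2
  · exact hanti (left_mem_Icc.2 hab) (Ioc_subset_Icc_self ht) ht.1

structure IsFirstZero (f : ℝ → ℝ) (t₀ : ℝ) : Prop where
  pos : 0 < t₀
  eq_zero : f t₀ = 0
  pos_of_mem_Ico : ∀ t ∈ Ico 0 t₀, 0 < f t

theorem IsFirstZero.nonneg_of_mem_Icc {f : ℝ → ℝ} {t₀ : ℝ} (hz : IsFirstZero f t₀) :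
    ∀ t ∈ Icc 0 t₀, 0 ≤ f t := fun t ht =>
  ht.2.eq_or_lt.elim (fun h => (h ▸ hz.eq_zero).ge) fun h => (hz.pos_of_mem_Ico t ⟨ht.1, h⟩).le

theorem Continuous.exists_isFirstZero {f : ℝ → ℝ} (hf : Continuous f) (h0 : 0 < f 0) {t₁ : ℝ}
    (ht₁ : 0 ≤ t₁) (h₁ : f t₁ ≤ 0) : ∃ t₀, IsFirstZero f t₀ := by
  set Z := Ici 0 ∩ f ⁻¹' Iic 0
  have hbdd : BddBelow Z := ⟨0, fun t ht => ht.1⟩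
  obtain ⟨hτ0, hτ⟩ : sInf Z ∈ Z :=
    (isClosed_Ici.inter (isClosed_Iic.preimage hf)).csInf_mem ⟨t₁, ht₁, h₁⟩ hbdd
  have hpos : ∀ t ∈ Ico 0 (sInf Z), 0 < f t := fun t ht =>
    not_le.1 fun hle => (csInf_le hbdd ⟨ht.1, hle⟩).not_gt ht.2
  obtain ⟨c, hc, hfc⟩ := intermediate_value_Icc' hτ0 hf.continuousOn ⟨hτ, h0.le⟩
  have hcτ : c = sInf Z := le_antisymm hc.2 (csInf_le hbdd ⟨hc.1, hfc.le⟩)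
  refine ⟨sInf Z, ⟨lt_of_le_of_ne hτ0 fun h => ?_, hcτ ▸ hfc, hpos⟩⟩
  rw [← h] at hτ
  exact hτ.not_gt h0

namespace Duffing

noncomputable def energy (μ x v : ℝ) : ℝ := v ^ 2 / 2 + μ * x ^ 2 / 2 + x ^ 4 / 4

def field (μ : ℝ) (p : ℝ × ℝ) : ℝ × ℝ := (p.2, -(μ * p.1 + p.1 ^ 3))

theorem lipschitzOnWith_field (μ R : ℝ) :
    LipschitzOnWith (|μ| + 3 * R ^ 2 + 1).toNNReal (field μ) {p | |p.1| ≤ R} := by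
  refine LipschitzOnWith.of_dist_le_mul fun p hp q hq => ?_
  obtain ⟨hp₁, hp₂⟩ := abs_le.1 (show |p.1| ≤ R from hp)
  obtain ⟨hq₁, hq₂⟩ := abs_le.1 (show |q.1| ≤ R from hq)
  have hquad : |p.1 ^ 2 + p.1 * q.1 + q.1 ^ 2| ≤ 3 * R ^ 2 := by
    rw [abs_le]
    constructor <;> nlinarith [sq_nonneg (p.1 + q.1),
      mul_nonneg (sub_nonneg.2 hp₂) (neg_le_iff_add_nonneg.1 hq₁),
      mul_nonneg (neg_le_iff_add_nonneg.1 hp₁) (sub_nonneg.2 hq₂),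
      mul_nonneg (sub_nonneg.2 hp₂) (neg_le_iff_add_nonneg.1 hp₁),
      mul_nonneg (sub_nonneg.2 hq₂) (neg_le_iff_add_nonneg.1 hq₁)]
  have hcubic : |-(μ * p.1 + p.1 ^ 3) - -(μ * q.1 + q.1 ^ 3)|
      ≤ (|μ| + 3 * R ^ 2) * |p.1 - q.1| := by
    rw [show -(μ * p.1 + p.1 ^ 3) - -(μ * q.1 + q.1 ^ 3)
        = -((p.1 - q.1) * (μ + (p.1 ^ 2 + p.1 * q.1 + q.1 ^ 2))) by ring,
      abs_neg, abs_mul, mul_comm]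
    gcongr
    exact (abs_add_le _ _).trans (by linarith)
  have h₁ : |p.1 - q.1| ≤ dist p q := by
    simp only [Prod.dist_eq, Real.dist_eq]; exact le_max_left _ _
  have h₂ : |p.2 - q.2| ≤ dist p q := by
    simp only [Prod.dist_eq, Real.dist_eq]; exact le_max_right _ _
  rw [Real.coe_toNNReal _ (by positivity), Prod.dist_eq (x := field μ p), Real.dist_eq,
    Real.dist_eq]
  have hK : 0 ≤ |μ| + 3 * R ^ 2 := by positivity
  dsimp only [field]
  refine max_le ?_ ?_
  · nlinarith [mul_nonneg hK (dist_nonneg (x := p) (y := q))]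
  · nlinarith [mul_le_mul_of_nonneg_left h₁ hK, dist_nonneg (x := p) (y := q)]

theorem sq_eq_of_energy_eq {μ α x v : ℝ} (hα : α ≠ 0) (h : energy μ x v = energy μ α 0) :
    v ^ 2 = α ^ 2 / 2 * ((α ^ 2 * (x / α) ^ 2 + (α ^ 2 + 2 * μ)) * (1 - (x / α) ^ 2)) := by
  unfold energy at h
  field_simp
  linear_combination 4 * h

structure IsSolution (μ : ℝ) (φ ψ : ℝ → ℝ) : Prop where
  hasDerivAt_fst : ∀ t, HasDerivAt φ (ψ t) t
  hasDerivAt_snd : ∀ t, HasDerivAt ψ (-(μ * φ t + φ t ^ 3)) t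

namespace IsSolution

variable {μ : ℝ} {φ ψ : ℝ → ℝ}

theorem of_contDiff (hφ : ContDiff ℝ 2 φ)
    (hode : ∀ t, deriv (deriv φ) t + μ * φ t + φ t ^ 3 = 0) : IsSolution μ φ (deriv φ) where
  hasDerivAt_fst t := (hφ.differentiable two_ne_zero t).hasDerivAt
  hasDerivAt_snd t := by
    have hψ : Differentiable ℝ (deriv φ) :=
      (hφ.iterate_deriv' 1 1).differentiable one_ne_zero
    rw [show -(μ * φ t + φ t ^ 3) = deriv (deriv φ) t by linarith [hode t]]
    exact (hψ t).hasDerivAt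

theorem continuous_fst (h : IsSolution μ φ ψ) : Continuous φ :=
  continuous_iff_continuousAt.2 fun t => (h.hasDerivAt_fst t).continuousAt

theorem continuous_snd (h : IsSolution μ φ ψ) : Continuous ψ :=
  continuous_iff_continuousAt.2 fun t => (h.hasDerivAt_snd t).continuousAt

theorem energy_eq (h : IsSolution μ φ ψ) (t s : ℝ) :
    energy μ (φ t) (ψ t) = energy μ (φ s) (ψ s) := by
  have hderiv : ∀ t, HasDerivAt (fun t => energy μ (φ t) (ψ t)) 0 t := fun t => by
    have hφ := h.hasDerivAt_fst t
    have hψ := h.hasDerivAt_snd t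
    refine ((((hψ.pow 2).div_const 2).add (((hφ.pow 2).const_mul μ).div_const 2)).add
      ((hφ.pow 4).div_const 4)).congr_deriv ?_
    push_cast
    ring
  exact is_const_of_deriv_eq_zero (fun t => (hderiv t).differentiableAt)
    (fun t => (hderiv t).deriv) t s

theorem comp_sub (h : IsSolution μ φ ψ) (c : ℝ) :
    IsSolution μ (fun t => φ (c - t)) (fun t => -ψ (c - t)) where
  hasDerivAt_fst t := (h.hasDerivAt_fst (c - t)).comp_const_sub c t
  hasDerivAt_snd t :=
    ((h.hasDerivAt_snd (c - t)).comp_const_sub c t).neg.congr_deriv (by ring)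

theorem neg (h : IsSolution μ φ ψ) : IsSolution μ (fun t => -φ t) (fun t => -ψ t) where
  hasDerivAt_fst t := (h.hasDerivAt_fst t).neg
  hasDerivAt_snd t := (h.hasDerivAt_snd t).neg.congr_deriv (by ring)

theorem eq_of_eq {χ ω : ℝ → ℝ} (hφ : IsSolution μ φ ψ) (hχ : IsSolution μ χ ω) {R : ℝ}
    (hφR : ∀ t, |φ t| ≤ R) (hχR : ∀ t, |χ t| ≤ R) {t₀ : ℝ} (h₁ : χ t₀ = φ t₀)
    (h₂ : ω t₀ = ψ t₀) : χ = φ := by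
  have := ODE_solution_unique_univ (v := fun _ => field μ) (s := fun _ => {p | |p.1| ≤ R})
    (f := fun t => (χ t, ω t)) (g := fun t => (φ t, ψ t)) (fun _ => lipschitzOnWith_field μ R)
    (fun t => ⟨(hχ.hasDerivAt_fst t).prodMk (hχ.hasDerivAt_snd t), hχR t⟩)
    (fun t => ⟨(hφ.hasDerivAt_fst t).prodMk (hφ.hasDerivAt_snd t), hφR t⟩) (Prod.ext h₁ h₂)
  exact funext fun t => congrArg Prod.fst (congrFun this t)

theorem fst_two_mul_sub_of_snd_eq_zero (h : IsSolution μ φ ψ) {R : ℝ} (hR : ∀ t, |φ t| ≤ R)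
    {c : ℝ} (hc : ψ c = 0) (t : ℝ) : φ (2 * c - t) = φ t := by
  have hcc : 2 * c - c = c := by ring
  exact congrFun (h.eq_of_eq (h.comp_sub (2 * c)) hR (fun t => hR _) (t₀ := c)
    (by simp only [hcc]) (by simp only [hcc, hc, neg_zero])) t

theorem fst_two_mul_sub_of_fst_eq_zero (h : IsSolution μ φ ψ) {R : ℝ} (hR : ∀ t, |φ t| ≤ R)
    {c : ℝ} (hc : φ c = 0) (t : ℝ) : φ (2 * c - t) = -φ t := by
  have hcc : 2 * c - c = c := by ring
  exact neg_eq_iff_eq_neg.1 <| congrFun (h.eq_of_eq (h.comp_sub (2 * c)).neg hR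
    (fun t => (abs_neg _).trans_le (hR _)) (t₀ := c) (by simp only [hcc, hc, neg_zero])
    (by simp only [hcc, neg_neg])) t

theorem strictAntiOn_fst (h : IsSolution μ φ ψ) {D : Set ℝ} (hD : Convex ℝ D)
    (hneg : ∀ t ∈ interior D, ψ t < 0) : StrictAntiOn φ D :=
  strictAntiOn_of_hasDerivWithinAt_neg hD h.continuous_fst.continuousOn
    (fun t _ => (h.hasDerivAt_fst t).hasDerivWithinAt) hneg

theorem strictAntiOn_snd (hμ : 0 ≤ μ) (h : IsSolution μ φ ψ) {D : Set ℝ} (hD : Convex ℝ D)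
    (hpos : ∀ t ∈ interior D, 0 < φ t) : StrictAntiOn ψ D :=
  strictAntiOn_of_hasDerivWithinAt_neg hD h.continuous_snd.continuousOn
    (fun t _ => (h.hasDerivAt_snd t).hasDerivWithinAt) fun t ht => by
      have := hpos t ht
      nlinarith [pow_pos this 3]

variable {α : ℝ}

theorem abs_fst_le (hμ : 0 ≤ μ) (h : IsSolution μ φ ψ) (h0 : φ 0 = α) (h0' : ψ 0 = 0)
    (t : ℝ) : |φ t| ≤ |α| := by
  have henergy := h.energy_eq t 0
  rw [h0, h0'] at henergy
  unfold energy at henergy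
  rw [← sq_le_sq]
  by_contra! hlt
  nlinarith [sq_nonneg (ψ t), mul_le_mul_of_nonneg_left hlt.le hμ, sq_nonneg (φ t ^ 2 - α ^ 2),
    mul_self_lt_mul_self (sq_nonneg α) hlt]

theorem even_fst (hμ : 0 ≤ μ) (h : IsSolution μ φ ψ) (h0 : φ 0 = α) (h0' : ψ 0 = 0) :
    Function.Even φ := fun t => by
  simpa using h.fst_two_mul_sub_of_snd_eq_zero (h.abs_fst_le hμ h0 h0') h0' t

theorem exists_pos_fst_nonpos (hμ : 0 ≤ μ) (h : IsSolution μ φ ψ) (h0 : φ 0 = α)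
    (h0' : ψ 0 = 0) : ∃ t, 0 < t ∧ φ t ≤ 0 := by
  by_contra! hpos
  have hanti : StrictAntiOn ψ (Ici 0) :=
    h.strictAntiOn_snd hμ (convex_Ici 0) fun t ht => hpos t (by simpa using ht)
  have hψ₁ : ψ 1 < 0 := h0' ▸ hanti self_mem_Ici (by norm_num) one_pos
  set τ := 1 + (|α| + 1) / -ψ 1
  have hτ : ψ 1 * (τ - 1) = -(|α| + 1) := by
    simp only [τ, add_sub_cancel_left]
    field_simp [hψ₁.ne]
  have hτ₁ : 1 < τ := lt_add_of_pos_right 1 (div_pos (by positivity) (neg_pos.2 hψ₁))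
  obtain ⟨c, hc, hslope⟩ := exists_hasDerivAt_eq_slope φ ψ hτ₁ h.continuous_fst.continuousOn
    fun t _ => h.hasDerivAt_fst t
  rw [eq_div_iff (sub_pos.2 hτ₁).ne'] at hslope
  have hψc : ψ c < ψ 1 := hanti (mem_Ici.2 zero_le_one) (mem_Ici.2 (by linarith [hc.1])) hc.1
  have hφ₁ := (le_abs_self _).trans (h.abs_fst_le hμ h0 h0' 1)
  nlinarith [hpos τ (by linarith), mul_lt_mul_of_pos_right hψc (sub_pos.2 hτ₁)]

theorem exists_isFirstZero (hμ : 0 ≤ μ) (hα : 0 < α) (h : IsSolution μ φ ψ) (h0 : φ 0 = α)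
    (h0' : ψ 0 = 0) : ∃ t₀, IsFirstZero φ t₀ := by
  obtain ⟨t, ht, hφt⟩ := h.exists_pos_fst_nonpos hμ h0 h0'
  exact h.continuous_fst.exists_isFirstZero (h0 ▸ hα) ht.le hφt

variable {t₀ : ℝ}

theorem snd_neg_of_isFirstZero (hμ : 0 ≤ μ) (h : IsSolution μ φ ψ) (h0' : ψ 0 = 0)
    (hz : IsFirstZero φ t₀) : ∀ t ∈ Ioc 0 t₀, ψ t < 0 := by
  have hanti : StrictAntiOn ψ (Icc 0 t₀) := h.strictAntiOn_snd hμ (convex_Icc 0 t₀) fun t ht =>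
    hz.pos_of_mem_Ico t (Ioo_subset_Ico_self (by rwa [interior_Icc] at ht))
  exact fun t ht => h0' ▸ hanti (left_mem_Icc.2 hz.pos.le) (Ioc_subset_Icc_self ht) ht.1

theorem strictAntiOn_of_isFirstZero (hμ : 0 ≤ μ) (h : IsSolution μ φ ψ) (h0' : ψ 0 = 0)
    (hz : IsFirstZero φ t₀) : StrictAntiOn φ (Icc 0 t₀) :=
  h.strictAntiOn_fst (convex_Icc 0 t₀) fun t ht =>
    h.snd_neg_of_isFirstZero hμ h0' hz t (Ioo_subset_Ioc_self (by rwa [interior_Icc] at ht))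

theorem periodic_of_isFirstZero (hμ : 0 ≤ μ) (h : IsSolution μ φ ψ) (h0 : φ 0 = α)
    (h0' : ψ 0 = 0) (hz : IsFirstZero φ t₀) : Function.Periodic φ (4 * t₀) := by
  have hodd := h.fst_two_mul_sub_of_fst_eq_zero (h.abs_fst_le hμ h0 h0') hz.eq_zero
  have heven := h.even_fst hμ h0 h0'
  intro t
  calc φ (t + 4 * t₀) = -φ (2 * t₀ - (t + 4 * t₀)) := by rw [hodd, neg_neg]
    _ = -φ (2 * t₀ - -t) := by rw [← heven (2 * t₀ - -t)]; ring_nf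
    _ = φ t := by rw [hodd, neg_neg, heven]

theorem fst_lt_of_isFirstZero (hμ : 0 ≤ μ) (h : IsSolution μ φ ψ) (h0 : φ 0 = α)
    (h0' : ψ 0 = 0) (hz : IsFirstZero φ t₀) : ∀ t ∈ Ioo 0 (4 * t₀), φ t < α := by
  have heven := h.even_fst hμ h0 h0'
  have hanti := h.strictAntiOn_of_isFirstZero hμ h0' hz
  have hα : 0 < α := h0 ▸ hz.pos_of_mem_Ico 0 ⟨le_rfl, hz.pos⟩
  rintro t ⟨ht₀, ht₄⟩
  rcases le_or_gt t t₀ with ht₁ | ht₁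
  · exact h0 ▸ hanti (left_mem_Icc.2 hz.pos.le) ⟨ht₀.le, ht₁⟩ ht₀
  rcases le_or_gt t (3 * t₀) with ht₃ | ht₃
  · have hnonneg : 0 ≤ φ (2 * t₀ - t) := by
      rcases le_total 0 (2 * t₀ - t) with h₂ | h₂
      · exact hz.nonneg_of_mem_Icc _ ⟨h₂, by linarith⟩
      · rw [← heven]; exact hz.nonneg_of_mem_Icc _ ⟨by linarith, by linarith⟩
    linarith [h.fst_two_mul_sub_of_fst_eq_zero (h.abs_fst_le hμ h0 h0') hz.eq_zero t]
  · have hshift : φ t = φ (4 * t₀ - t) := by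
      rw [← heven, ← h.periodic_of_isFirstZero hμ h0 h0' hz, neg_add_eq_sub]
    rw [hshift]
    exact h0 ▸ hanti (left_mem_Icc.2 hz.pos.le) ⟨by linarith, by linarith⟩ (by linarith)

theorem four_mul_le_of_periodic (hμ : 0 ≤ μ) (h : IsSolution μ φ ψ) (h0 : φ 0 = α)
    (h0' : ψ 0 = 0) (hz : IsFirstZero φ t₀) {T : ℝ} (hT : 0 < T)
    (hper : Function.Periodic φ T) : 4 * t₀ ≤ T := by
  by_contra! hlt
  have := h.fst_lt_of_isFirstZero hμ h0 h0' hz T ⟨hT, hlt⟩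
  rw [← h0, ← zero_add T, hper] at this
  exact this.false

theorem eq_integral_of_isFirstZero (hμ : 0 ≤ μ) (h : IsSolution μ φ ψ) (h0 : φ 0 = α)
    (h0' : ψ 0 = 0) (hz : IsFirstZero φ t₀) :
    t₀ = √2 * ∫ s in (0:ℝ)..1, 1 / √((α ^ 2 * s ^ 2 + (α ^ 2 + 2 * μ)) * (1 - s ^ 2)) := by
  have hα : 0 < α := h0 ▸ hz.pos_of_mem_Ico 0 ⟨le_rfl, hz.pos⟩
  set f : ℝ → ℝ := fun t => φ t / α
  set Q : ℝ → ℝ := fun s => (α ^ 2 * s ^ 2 + (α ^ 2 + 2 * μ)) * (1 - s ^ 2)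
  have hanti : StrictAntiOn f (Icc 0 t₀) := fun a ha b hb hab =>
    div_lt_div_of_pos_right (h.strictAntiOn_of_isFirstZero hμ h0' hz ha hb hab) hα
  have himage : f '' Ioc 0 t₀ = Ico 0 1 := by
    rw [hanti.image_Ioc_eq hz.pos.le (h.continuous_fst.div_const α).continuousOn]
    simp [hz.eq_zero, h0, hα.ne']
  have hspeed : ∀ t ∈ Ioc 0 t₀, |ψ t / α| • (1 / √(Q (f t))) = 1 / √2 := by
    intro t ht
    have hsq : (ψ t / α) ^ 2 = Q (f t) / 2 := by
      rw [div_pow, sq_eq_of_energy_eq hα.ne' (h0 ▸ h0' ▸ h.energy_eq t 0)]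
      simp only [Q, f]
      field_simp
    have hQ : 0 < Q (f t) := by
      have hψ := h.snd_neg_of_isFirstZero hμ h0' hz t ht
      linarith [sq_pos_of_neg (div_neg_of_neg_of_pos hψ hα)]
    rw [← sqrt_sq_eq_abs, hsq, sqrt_div' _ zero_le_two, smul_eq_mul]
    field_simp [(sqrt_pos.2 hQ).ne']
  -- `integral_image_eq_integral_abs_deriv_smul` has no integrability hypothesis, so the
  -- singularity of the integrand at `s = 1` needs no separate estimate.
  calc t₀ = √2 * ∫ _ in Ioc 0 t₀, 1 / √2 := by
        simp [hz.pos.le]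
        field_simp
    _ = √2 * ∫ t in Ioc 0 t₀, |ψ t / α| • (1 / √(Q (f t))) := by
        rw [setIntegral_congr_fun measurableSet_Ioc hspeed]
    _ = √2 * ∫ s in Ico 0 1, 1 / √(Q s) := by
        rw [← himage, integral_image_eq_integral_abs_deriv_smul measurableSet_Ioc
          (fun t _ => ((h.hasDerivAt_fst t).div_const α).hasDerivWithinAt)
          (hanti.mono Ioc_subset_Icc_self).injOn]
    _ = _ := by
        rw [intervalIntegral.integral_of_le zero_le_one, integral_Ico_eq_integral_Ioc]

end IsSolution

end Duffing

/-- The solution `φ_α` of the Duffing equation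
`φ'' + μφ + φ³ = 0` with `φ(0) = α > 0`, `φ'(0) = 0` is periodic and its
minimal positive period `T(E)` (with `E = μα²/2 + α⁴/4` and
`Θ± = √(μ² + 4E) ± μ`) is given by
`T(E) = 4√2 ∫₀¹ ds / √((Θ₋ s² + Θ₊)(1 − s²))`. -/
theorem duffing_period_formula
    (μ α : ℝ) (hμ : 0 < μ) (hα : 0 < α)
    (φ : ℝ → ℝ) (hφ : ContDiff ℝ 2 φ)
    (hode : ∀ t : ℝ, deriv (deriv φ) t + μ * φ t + (φ t) ^ 3 = 0)
    (h0 : φ 0 = α) (h0' : deriv φ 0 = 0) :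
    ∃ T : ℝ, 0 < T ∧ Function.Periodic φ T ∧
      (∀ T' : ℝ, 0 < T' → Function.Periodic φ T' → T ≤ T') ∧
      T = 4 * Real.sqrt 2 * ∫ s in (0:ℝ)..1,
        1 / Real.sqrt (((Real.sqrt (μ ^ 2 + 4 * (μ * α ^ 2 / 2 + α ^ 4 / 4)) - μ) * s ^ 2
          + (Real.sqrt (μ ^ 2 + 4 * (μ * α ^ 2 / 2 + α ^ 4 / 4)) + μ)) * (1 - s ^ 2)) := by
  have h := Duffing.IsSolution.of_contDiff hφ hode
  obtain ⟨t₀, hz⟩ := h.exists_isFirstZero hμ.le hα h0 h0'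
  refine ⟨4 * t₀, mul_pos four_pos hz.pos, h.periodic_of_isFirstZero hμ.le h0 h0' hz,
    fun _ => h.four_mul_le_of_periodic hμ.le h0 h0' hz, ?_⟩
  have hΘ : √(μ ^ 2 + 4 * (μ * α ^ 2 / 2 + α ^ 4 / 4)) = μ + α ^ 2 := by
    rw [show μ ^ 2 + 4 * (μ * α ^ 2 / 2 + α ^ 4 / 4) = (μ + α ^ 2) ^ 2 by ring]
    exact sqrt_sq (by positivity)
  rw [h.eq_integral_of_isFirstZero hμ.le h0 h0' hz, hΘ, add_sub_cancel_left,
    show μ + α ^ 2 + μ = α ^ 2 + 2 * μ by ring]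
  ring
end

section
/- Let μ > 0 and for E > 0 let T(E) = 4√2 ∫₀¹ ds / √((Θ₋(E) s² + Θ₊(E))(1 − s²)) with Θ±(E) = √(μ² + 4E) ± μ, the minimal period of the Duffing solution with energy E. Then, as E → 0⁺, T(E) = (2π/√μ)(1 − 3E/(4μ²)) + o(E) and consequently (2π/T(E))² = μ(1 + 3E/(2μ²)) + o(E); i.e. lim_{E→0⁺} [(2π/T(E))² − μ]/E = 3/(2μ). -/
/-!
Put `ε = Θ₋(E) / (2μ)`, so that `ε (1 + ε) = E / μ²` and
`T(E) = (4 / √μ) ∫₀¹ ds / √((1 + ε (1 + s²)) (1 - s²))`. Sandwiching `(1 + t)^(-1/2)` between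
`1 - t/2` and `1 - t/2 + 3t²/8` for `t ≥ 0` and integrating against the arcsine weight
(`∫₀¹ 1/√(1 - s²) = π/2`, `∫₀¹ s²/√(1 - s²) = π/4`) gives
`T(E) = (2π/√μ)(1 - 3ε/4) + O(ε²) = (2π/√μ)(1 - 3E/(4μ²)) + O(E²)`.
The second limit follows from the first by the chain rule for `y ↦ (2π/y)²` at `y = 2π/√μ`.
-/

open Filter Real Set Topology intervalIntegral MeasureTheory

theorem one_sub_half_le_one_div_sqrt_one_add {t : ℝ} (ht : -1 < t) : 1 - t / 2 ≤ 1 / √(1 + t) := by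
  have hw : 0 < √(1 + t) := sqrt_pos.2 (by linarith)
  have hsq : √(1 + t) ^ 2 = 1 + t := sq_sqrt (by linarith)
  rw [le_div_iff₀ hw]
  rcases le_or_gt t 2 with h | h
  · nlinarith [sq_nonneg (√(1 + t) - 1), sq_nonneg ((1 - t / 2) * √(1 + t) - 1),
      mul_nonneg (by linarith : (0:ℝ) ≤ 1 - t / 2) hw.le]
  · nlinarith

theorem one_div_sqrt_one_add_le {t : ℝ} (ht : 0 ≤ t) :
    1 / √(1 + t) ≤ 1 - t / 2 + 3 / 8 * t ^ 2 := by
  have hw : 0 < √(1 + t) := sqrt_pos.2 (by linarith)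
  have hsq : √(1 + t) ^ 2 = 1 + t := sq_sqrt (by linarith)
  have hq : 0 < 1 - t / 2 + 3 / 8 * t ^ 2 := by nlinarith [sq_nonneg (t - 2 / 3)]
  have hsq_ge : 1 ≤ ((1 - t / 2 + 3 / 8 * t ^ 2) * √(1 + t)) ^ 2 := by
    rw [mul_pow, hsq]
    nlinarith [mul_nonneg (pow_nonneg ht 3) (sq_nonneg (t - 5 / 6)), pow_nonneg ht 3]
  rw [div_le_iff₀ hw]
  nlinarith [mul_pos hq hw]

theorem intervalIntegrable_and_integral_deriv_of_nonneg {g g' : ℝ → ℝ} {a b : ℝ} (hab : a ≤ b)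
    (hcont : ContinuousOn g (Icc a b)) (hderiv : ∀ x ∈ Ioo a b, HasDerivAt g (g' x) x)
    (hpos : ∀ x ∈ Ioo a b, 0 ≤ g' x) :
    IntervalIntegrable g' volume a b ∧ ∫ x in a..b, g' x = g b - g a := by
  have hint : IntervalIntegrable g' volume a b :=
    intervalIntegrable_deriv_of_nonneg (by rwa [uIcc_of_le hab])
      (by simpa [hab] using hderiv) (by simpa [hab] using hpos)
  exact ⟨hint, integral_eq_sub_of_hasDerivAt_of_le hab hcont hderiv hint⟩

theorem intervalIntegrable_and_integral_one_div_sqrt_one_sub_sq :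
    IntervalIntegrable (fun s : ℝ => 1 / √(1 - s ^ 2)) volume 0 1 ∧
      ∫ s in (0:ℝ)..1, 1 / √(1 - s ^ 2) = π / 2 := by
  have h := intervalIntegrable_and_integral_deriv_of_nonneg zero_le_one
    continuous_arcsin.continuousOn (fun x hx => hasDerivAt_arcsin (by linarith [hx.1]) hx.2.ne)
    (fun x _ => by positivity)
  rwa [arcsin_one, arcsin_zero, sub_zero] at h

theorem hasDerivAt_arcsin_sub_mul_sqrt {x : ℝ} (hx : x ∈ Ioo (-1 : ℝ) 1) :
    HasDerivAt (fun s => (arcsin s - s * √(1 - s ^ 2)) / 2) (x ^ 2 / √(1 - x ^ 2)) x := by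
  have hx2 : 0 < 1 - x ^ 2 := by nlinarith [hx.1, hx.2]
  have hsqrt : HasDerivAt (fun s => √(1 - s ^ 2)) (-(2 * x) / (2 * √(1 - x ^ 2))) x := by
    have := ((hasDerivAt_pow 2 x).const_sub 1).sqrt hx2.ne'
    simpa using this
  refine (((hasDerivAt_arcsin (by linarith [hx.1]) hx.2.ne).sub
    ((hasDerivAt_id' x).mul hsqrt)).div_const 2).congr_deriv ?_
  have hw : √(1 - x ^ 2) ^ 2 = 1 - x ^ 2 := sq_sqrt hx2.le
  have hw0 : √(1 - x ^ 2) ≠ 0 := (sqrt_pos.2 hx2).ne'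
  field_simp
  linear_combination -hw

theorem intervalIntegrable_and_integral_sq_div_sqrt_one_sub_sq :
    IntervalIntegrable (fun s : ℝ => s ^ 2 / √(1 - s ^ 2)) volume 0 1 ∧
      ∫ s in (0:ℝ)..1, s ^ 2 / √(1 - s ^ 2) = π / 4 := by
  have h := intervalIntegrable_and_integral_deriv_of_nonneg zero_le_one (by fun_prop)
    (fun x hx => hasDerivAt_arcsin_sub_mul_sqrt ⟨by linarith [hx.1], hx.2⟩)
    (fun x _ => by positivity)
  refine ⟨h.1, h.2.trans ?_⟩
  simp only [arcsin_one, arcsin_zero]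
  norm_num
  ring

theorem affine_div_sqrt_one_sub_sq_eq (a b s : ℝ) :
    (a + b * s ^ 2) / √(1 - s ^ 2) = a * (1 / √(1 - s ^ 2)) + b * (s ^ 2 / √(1 - s ^ 2)) := by
  ring

theorem intervalIntegrable_affine_div_sqrt_one_sub_sq (a b : ℝ) :
    IntervalIntegrable (fun s : ℝ => (a + b * s ^ 2) / √(1 - s ^ 2)) volume 0 1 := by
  simp only [affine_div_sqrt_one_sub_sq_eq]
  exact (intervalIntegrable_and_integral_one_div_sqrt_one_sub_sq.1.const_mul a).add
    (intervalIntegrable_and_integral_sq_div_sqrt_one_sub_sq.1.const_mul b)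

theorem integral_affine_div_sqrt_one_sub_sq (a b : ℝ) :
    ∫ s in (0:ℝ)..1, (a + b * s ^ 2) / √(1 - s ^ 2) = a * (π / 2) + b * (π / 4) := by
  obtain ⟨hint₀, hI₀⟩ := intervalIntegrable_and_integral_one_div_sqrt_one_sub_sq
  obtain ⟨hint₂, hI₂⟩ := intervalIntegrable_and_integral_sq_div_sqrt_one_sub_sq
  simp only [affine_div_sqrt_one_sub_sq_eq]
  rw [integral_add (hint₀.const_mul a) (hint₂.const_mul b), intervalIntegral.integral_const_mul,
    intervalIntegral.integral_const_mul, hI₀, hI₂]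

noncomputable def duffingIntegral (ε : ℝ) : ℝ :=
  ∫ s in (0:ℝ)..1, 1 / √((1 + ε * (1 + s ^ 2)) * (1 - s ^ 2))

theorem duffingIntegrand_bounds {ε s : ℝ} (hε : 0 ≤ ε) (hs : s ∈ Icc (0 : ℝ) 1) :
    (1 - ε / 2 + -(ε / 2) * s ^ 2) / √(1 - s ^ 2)
        ≤ 1 / √((1 + ε * (1 + s ^ 2)) * (1 - s ^ 2)) ∧
      1 / √((1 + ε * (1 + s ^ 2)) * (1 - s ^ 2))
        ≤ (1 - ε / 2 + 3 / 2 * ε ^ 2 + -(ε / 2) * s ^ 2) / √(1 - s ^ 2) := by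
  set t := ε * (1 + s ^ 2)
  have ht : 0 ≤ t := by positivity
  have hs2 : s ^ 2 ≤ 1 := by nlinarith [hs.1, hs.2]
  have ht_le : t ≤ 2 * ε := by nlinarith
  have hsplit : 1 / √((1 + t) * (1 - s ^ 2)) = 1 / √(1 + t) * (1 / √(1 - s ^ 2)) := by
    rw [sqrt_mul (by linarith), one_div_mul_one_div]
  have hw : 0 ≤ 1 / √(1 - s ^ 2) := by positivity
  rw [hsplit, div_eq_mul_one_div (1 - ε / 2 + _),
    div_eq_mul_one_div (1 - ε / 2 + 3 / 2 * ε ^ 2 + _)]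
  constructor
  · refine mul_le_mul_of_nonneg_right ?_ hw
    linarith [one_sub_half_le_one_div_sqrt_one_add (by linarith : -1 < t)]
  · refine mul_le_mul_of_nonneg_right ?_ hw
    nlinarith [one_div_sqrt_one_add_le ht]

theorem abs_duffingIntegral_sub_le {ε : ℝ} (hε : 0 ≤ ε) :
    |duffingIntegral ε - (π / 2 - 3 * π * ε / 8)| ≤ 3 * π * ε ^ 2 / 4 := by
  have hlower := intervalIntegrable_affine_div_sqrt_one_sub_sq (1 - ε / 2) (-(ε / 2))
  have hupper :=
    intervalIntegrable_affine_div_sqrt_one_sub_sq (1 - ε / 2 + 3 / 2 * ε ^ 2) (-(ε / 2))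
  have hint : IntervalIntegrable (fun s : ℝ => 1 / √((1 + ε * (1 + s ^ 2)) * (1 - s ^ 2)))
      volume 0 1 := by
    refine hupper.mono_fun' (by measurability) ?_
    rw [uIoc_of_le zero_le_one]
    filter_upwards [self_mem_ae_restrict measurableSet_Ioc] with s hs
    rw [norm_of_nonneg (by positivity)]
    exact (duffingIntegrand_bounds hε (Ioc_subset_Icc_self hs)).2
  have h₁ := integral_mono_on zero_le_one hlower hint fun s hs => (duffingIntegrand_bounds hε hs).1
  have h₂ := integral_mono_on zero_le_one hint hupper fun s hs => (duffingIntegrand_bounds hε hs).2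
  rw [integral_affine_div_sqrt_one_sub_sq] at h₁ h₂
  rw [abs_sub_le_iff]
  unfold duffingIntegral
  constructor <;> nlinarith [pi_pos, sq_nonneg ε]

noncomputable def duffingPeriod (μ E : ℝ) : ℝ :=
  4 * √2 * ∫ s in (0:ℝ)..1,
    1 / √(((√(μ ^ 2 + 4 * E) - μ) * s ^ 2 + (√(μ ^ 2 + 4 * E) + μ)) * (1 - s ^ 2))

-- `Θ₋(E) / (2μ)`: as `Θ₊ = Θ₋ + 2μ`, the factor `Θ₋ s² + Θ₊` of the period integrand
-- is `2μ (1 + ε (1 + s²))`.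
noncomputable def duffingEps (μ E : ℝ) : ℝ := (√(μ ^ 2 + 4 * E) - μ) / (2 * μ)

theorem duffingEps_nonneg {μ E : ℝ} (hμ : 0 ≤ μ) (hE : 0 ≤ E) : 0 ≤ duffingEps μ E := by
  have : μ ≤ √(μ ^ 2 + 4 * E) := le_sqrt_of_sq_le (by linarith)
  unfold duffingEps
  exact div_nonneg (by linarith) (by linarith)

theorem duffingEps_mul_one_add {μ E : ℝ} (hμ : μ ≠ 0) (hE : 0 ≤ μ ^ 2 + 4 * E) :
    duffingEps μ E * (1 + duffingEps μ E) = E / μ ^ 2 := by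
  have h := sq_sqrt hE
  unfold duffingEps
  field_simp
  linear_combination h

theorem tendsto_duffingEps {μ : ℝ} (hμ : 0 ≤ μ) : Tendsto (duffingEps μ) (𝓝 0) (𝓝 0) := by
  have hcont : Continuous (duffingEps μ) := by unfold duffingEps; fun_prop
  simpa [duffingEps, sqrt_sq hμ] using hcont.tendsto 0

theorem duffingPeriod_eq {μ : ℝ} (hμ : 0 < μ) (E : ℝ) :
    duffingPeriod μ E = 4 / √μ * duffingIntegral (duffingEps μ E) := by
  have hintegrand : ∀ s : ℝ,
      1 / √(((√(μ ^ 2 + 4 * E) - μ) * s ^ 2 + (√(μ ^ 2 + 4 * E) + μ)) * (1 - s ^ 2))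
        = 1 / √(2 * μ) * (1 / √((1 + duffingEps μ E * (1 + s ^ 2)) * (1 - s ^ 2))) := by
    intro s
    rw [one_div_mul_one_div, ← sqrt_mul (by positivity)]
    unfold duffingEps
    field_simp
    ring_nf
  unfold duffingPeriod duffingIntegral
  simp only [hintegrand, intervalIntegral.integral_const_mul, sqrt_mul zero_le_two μ]
  have : √2 ≠ 0 := by positivity
  have : √μ ≠ 0 := by positivity
  field_simp

theorem abs_duffingPeriod_sub_le {μ E : ℝ} (hμ : 0 < μ) (hE : 0 ≤ E) :
    |duffingPeriod μ E - 2 * π / √μ * (1 - 3 * E / (4 * μ ^ 2))|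
      ≤ 9 * π / (2 * √μ) * duffingEps μ E ^ 2 := by
  rw [duffingPeriod_eq hμ]
  set ε := duffingEps μ E
  have hε : 0 ≤ ε := duffingEps_nonneg hμ.le hE
  have hE_eq : E = μ ^ 2 * (ε + ε ^ 2) := by
    have := duffingEps_mul_one_add hμ.ne' (by positivity : 0 ≤ μ ^ 2 + 4 * E)
    field_simp at this
    linear_combination -this
  have hdiff : 4 / √μ * duffingIntegral ε - 2 * π / √μ * (1 - 3 * E / (4 * μ ^ 2))
      = 4 / √μ * ((duffingIntegral ε - (π / 2 - 3 * π * ε / 8)) + 3 * π * ε ^ 2 / 8) := by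
    rw [hE_eq]
    field_simp
    ring
  have hK := abs_duffingIntegral_sub_le hε
  rw [hdiff, abs_mul, abs_of_pos (by positivity : 0 < 4 / √μ)]
  calc 4 / √μ * |duffingIntegral ε - (π / 2 - 3 * π * ε / 8) + 3 * π * ε ^ 2 / 8|
      ≤ 4 / √μ * (3 * π * ε ^ 2 / 4 + 3 * π * ε ^ 2 / 8) := by
        gcongr
        have hr : |3 * π * ε ^ 2 / 8| = 3 * π * ε ^ 2 / 8 := abs_of_nonneg (by positivity)
        exact (abs_add_le _ _).trans (by rw [hr]; linarith)
    _ = 9 * π / (2 * √μ) * ε ^ 2 := by ring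

theorem abs_duffingPeriod_sub_div_le {μ E : ℝ} (hμ : 0 < μ) (hE : 0 < E) :
    |(duffingPeriod μ E - 2 * π / √μ * (1 - 3 * E / (4 * μ ^ 2))) / E|
      ≤ 9 * π / (2 * μ ^ 2 * √μ) * duffingEps μ E := by
  set ε := duffingEps μ E
  have hε : 0 ≤ ε := duffingEps_nonneg hμ.le hE.le
  have hε_le : ε ≤ E / μ ^ 2 := by
    have := duffingEps_mul_one_add hμ.ne' (by positivity : 0 ≤ μ ^ 2 + 4 * E)
    nlinarith
  rw [abs_div, abs_of_pos hE, div_le_iff₀ hE]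
  calc _ ≤ 9 * π / (2 * √μ) * ε ^ 2 := abs_duffingPeriod_sub_le hμ hE.le
    _ ≤ 9 * π / (2 * √μ) * (ε * (E / μ ^ 2)) := by rw [sq]; gcongr
    _ = 9 * π / (2 * μ ^ 2 * √μ) * ε * E := by field_simp

-- The chain rule, applied to the extension of `f` by `f 0 = y₀`.
theorem tendsto_comp_sub_div_of_hasDerivAt {f g : ℝ → ℝ} {y₀ g' L : ℝ}
    (hg : HasDerivAt g g' y₀) (hf : Tendsto (fun x => (f x - y₀) / x) (𝓝[>] 0) (𝓝 L)) :
    Tendsto (fun x => (g (f x) - g y₀) / x) (𝓝[>] 0) (𝓝 (g' * L)) := by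
  set F := Function.update f 0 y₀
  have hF0 : F 0 = y₀ := Function.update_self ..
  have hFx : ∀ x ∈ Ioi (0 : ℝ), F x = f x := fun x hx => Function.update_of_ne hx.ne' ..
  have hF : HasDerivWithinAt F L (Ioi 0) 0 := by
    rw [hasDerivWithinAt_iff_tendsto_slope, sdiff_singleton_eq_self self_notMem_Ioi]
    refine hf.congr' (eventually_nhdsWithin_of_forall fun x hx => ?_)
    rw [slope_def_field, hFx x hx, hF0, sub_zero]
  have hgF := (hF0 ▸ hg).comp_hasDerivWithinAt 0 hF
  rw [hasDerivWithinAt_iff_tendsto_slope, sdiff_singleton_eq_self self_notMem_Ioi] at hgF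
  refine hgF.congr' (eventually_nhdsWithin_of_forall fun x hx => ?_)
  rw [slope_def_field, Function.comp_apply, Function.comp_apply, hFx x hx, hF0, sub_zero]

theorem tendsto_duffingPeriod_sub_div {μ : ℝ} (hμ : 0 < μ) :
    Tendsto (fun E => (duffingPeriod μ E - 2 * π / √μ * (1 - 3 * E / (4 * μ ^ 2))) / E)
      (𝓝[>] 0) (𝓝 0) := by
  have hε : Tendsto (duffingEps μ) (𝓝[>] 0) (𝓝 0) :=
    (tendsto_duffingEps hμ.le).mono_left nhdsWithin_le_nhds
  refine squeeze_zero_norm' ?_ (by simpa using hε.const_mul (9 * π / (2 * μ ^ 2 * √μ)))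
  filter_upwards [self_mem_nhdsWithin] with E hE
  exact abs_duffingPeriod_sub_div_le hμ hE

theorem tendsto_two_pi_div_sq_sub_div {μ : ℝ} (hμ : 0 < μ) {T : ℝ → ℝ}
    (hT : Tendsto (fun E => (T E - 2 * π / √μ * (1 - 3 * E / (4 * μ ^ 2))) / E) (𝓝[>] 0) (𝓝 0)) :
    Tendsto (fun E => ((2 * π / T E) ^ 2 - μ) / E) (𝓝[>] 0) (𝓝 (3 / (2 * μ))) := by
  have hsμ : 0 < √μ := sqrt_pos.2 hμ
  have hsq : √μ ^ 2 = μ := sq_sqrt hμ.le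
  have hT₀ : Tendsto (fun E => (T E - 2 * π / √μ) / E) (𝓝[>] 0)
      (𝓝 (-(3 * π / (2 * μ ^ 2 * √μ)))) := by
    refine (zero_add (-(3 * π / (2 * μ ^ 2 * √μ))) ▸ hT.add_const _).congr'
      (eventually_nhdsWithin_of_forall fun E hE => ?_)
    have : E ≠ 0 := (mem_Ioi.1 hE).ne'
    field_simp
    ring
  have hg : HasDerivAt (fun y => (2 * π / y) ^ 2) (-(μ * √μ / π)) (2 * π / √μ) := by
    refine (((hasDerivAt_const _ (2 * π)).fun_div (hasDerivAt_id' _) (by positivity)).fun_pow 2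
      ).congr_deriv ?_
    field_simp
    norm_num
    linear_combination 2 * hsq
  have hgy₀ : (2 * π / (2 * π / √μ)) ^ 2 = μ := by field_simp; exact hsq
  have hL : -(μ * √μ / π) * -(3 * π / (2 * μ ^ 2 * √μ)) = 3 / (2 * μ) := by field_simp
  have h := tendsto_comp_sub_div_of_hasDerivAt hg hT₀
  rwa [hL, hgy₀] at h

/-- With `μ > 0`, `Θ±(E) = √(μ² + 4E) ± μ` and
`T(E) = 4√2 ∫₀¹ ds / √((Θ₋(E) s² + Θ₊(E))(1 − s²))` (the minimal period of the
Duffing solution with energy `E`), as `E → 0⁺` one has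
`T(E) = (2π/√μ)(1 − 3E/(4μ²)) + o(E)` and consequently
`(2π/T(E))² = μ(1 + 3E/(2μ²)) + o(E)`, i.e.
`lim_{E→0⁺} [(2π/T(E))² − μ]/E = 3/(2μ)`. -/
theorem duffing_period_asymptotics
    (μ : ℝ) (hμ : 0 < μ) (T : ℝ → ℝ)
    (hT : ∀ E : ℝ, 0 < E →
      T E = 4 * Real.sqrt 2 * ∫ s in (0:ℝ)..1,
        1 / Real.sqrt (((Real.sqrt (μ ^ 2 + 4 * E) - μ) * s ^ 2
          + (Real.sqrt (μ ^ 2 + 4 * E) + μ)) * (1 - s ^ 2))) :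
    Tendsto (fun E : ℝ =>
        (T E - (2 * Real.pi / Real.sqrt μ) * (1 - 3 * E / (4 * μ ^ 2))) / E)
      (nhdsWithin 0 (Set.Ioi 0)) (nhds 0) ∧
    Tendsto (fun E : ℝ => ((2 * Real.pi / T E) ^ 2 - μ) / E)
      (nhdsWithin 0 (Set.Ioi 0)) (nhds (3 / (2 * μ))) := by
  have hperiod : Tendsto (fun E => (T E - 2 * π / √μ * (1 - 3 * E / (4 * μ ^ 2))) / E)
      (𝓝[>] 0) (𝓝 0) :=
    (tendsto_duffingPeriod_sub_div hμ).congr'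
      (eventually_nhdsWithin_of_forall fun E hE => by dsimp only; rw [hT E hE]; rfl)
  exact ⟨hperiod, tendsto_two_pi_div_sq_sub_div hμ hperiod⟩
end
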